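/- arXiv:math/0312528 — 7 statements merged into one kernel-verified Lean document; each statement's English description precedes it below -/
import Mathlib

section
/- Under the Newton diagram setup, assume additionally that there is a neighborhood of 0 on which, at every point z ≠ 0, some Wronskian W_{jk}(z) ≠ 0, and fix α with 0 ≤ α ≤ M − 1. Then there exist C > 0 and t₀ ∈ (0,1) such that for all t ∈ (0, t₀) and all z with |z| = t^{m_{α+1}}: | ln h_t(z) − 2 m_{α+1} ln(1/t) | ≤ C. -/
open scoped Classical BigOperators

section NewtonHelpers
open Filter Asymptotics

lemma npow_helper (n : ℕ) (z : ℂ) : (n:ℂ) * (z * z^(n-1)) = n * z^n := by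
  cases n with
  | zero => simp
  | succ k => rw [Nat.add_sub_cancel, pow_succ]; ring

lemma rpow_sq' (t a : ℝ) (ht : 0 < t) : (t ^ a) ^ 2 = t ^ (2 * a) := by
  rw [← Real.rpow_natCast (t ^ a) 2, ← Real.rpow_mul ht.le]
  norm_num [mul_comm]

lemma div_rpow_helper (t c1 c2 a b : ℝ) (ht : 0 < t) (hc2 : c2 ≠ 0) :
    (c1 * t ^ a) / ((c2 * t ^ b)^2) = (c1 / c2^2) * t ^ (a - 2*b) := by
  have h1 : (c2 * t ^ b)^2 = c2^2 * t^(2*b) := by rw [mul_pow, rpow_sq' t b ht]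
  rw [h1, Real.rpow_sub ht]
  have h2 : t ^ (2*b) ≠ 0 := ne_of_gt (Real.rpow_pos_of_pos ht _)
  field_simp

lemma deriv_analyticAt_zero (f : ℂ → ℂ) (hf : AnalyticAt ℂ f 0) :
    AnalyticAt ℂ (deriv f) 0 := by
  obtain ⟨s, hs, hos⟩ := hf.exists_mem_nhds_analyticOnNhd
  exact hos.deriv 0 (mem_of_mem_nhds hs)

section helpers

lemma factor_lead (F : ℂ → ℂ) (uu : ℂ) (pp : ℕ) (hu : uu ≠ 0)
    (hF : AnalyticAt ℂ F 0) (hne : ¬ F =ᶠ[nhds (0:ℂ)] 0)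
    (hO : (fun z : ℂ => F z - uu * z ^ pp) =O[nhds (0:ℂ)] fun z : ℂ => z ^ (pp+1)) :
    ∃ g : ℂ → ℂ, AnalyticAt ℂ g 0 ∧ g 0 = uu ∧ ∀ᶠ z in nhds (0:ℂ), F z = z ^ pp * g z := by
  obtain ⟨n, g, hg, hg0, heq⟩ := hF.exists_eventuallyEq_pow_smul_nonzero_iff.mpr hne
  simp only [sub_zero, smul_eq_mul] at heq
  have hlit : (fun z : ℂ => F z - uu * z ^ pp) =o[nhds (0:ℂ)] fun z : ℂ => z ^ pp :=
    hO.trans_isLittleO (isLittleO_pow_pow (lt_add_one pp))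
  have T : Tendsto (fun z : ℂ => (F z - uu * z ^ pp) / z ^ pp) (nhds 0) (nhds 0) :=
    hlit.tendsto_div_nhds_zero
  have T' : Tendsto (fun z : ℂ => z ^ ((n:ℤ) - pp) * g z) (nhdsWithin 0 {(0:ℂ)}ᶜ) (nhds uu) := by
    have h0 : Tendsto (fun z : ℂ => (F z - uu * z ^ pp) / z ^ pp + uu)
        (nhdsWithin 0 {(0:ℂ)}ᶜ) (nhds (0 + uu)) :=
      (T.mono_left nhdsWithin_le_nhds).add tendsto_const_nhds
    rw [zero_add] at h0
    refine h0.congr' ?_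
    filter_upwards [eventually_nhdsWithin_of_eventually_nhds heq,
      eventually_mem_nhdsWithin] with z hz hz0
    simp only [Set.mem_compl_iff, Set.mem_singleton_iff] at hz0
    rw [hz, zpow_sub₀ hz0, zpow_natCast, zpow_natCast]
    field_simp [pow_ne_zero _ hz0]
    ring
  have hgc : Tendsto g (nhdsWithin 0 {(0:ℂ)}ᶜ) (nhds (g 0)) :=
    hg.continuousAt.continuousWithinAt
  have Tz : Tendsto (fun z : ℂ => z ^ ((n:ℤ) - pp)) (nhdsWithin 0 {(0:ℂ)}ᶜ)
      (nhds (uu / g 0)) := by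
    have hdiv := T'.div hgc hg0
    refine hdiv.congr' ?_
    filter_upwards [eventually_nhdsWithin_of_eventually_nhds
      (hg.continuousAt.eventually_ne hg0)] with z hz
    simp only [Pi.div_apply]
    rw [mul_div_assoc, div_self hz, mul_one]
  rcases lt_trichotomy ((n:ℤ) - pp) 0 with hk | hk | hk
  · exfalso
    have hbig : Tendsto (fun z : ℂ => ‖z ^ ((n:ℤ) - pp)‖) (nhdsWithin 0 {(0:ℂ)}ᶜ) atTop :=
      tendsto_norm_cobounded_atTop.comp (tendsto_zpow_nhdsNE_zero_cobounded hk)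
    exact not_tendsto_atTop_of_tendsto_nhds Tz.norm hbig
  · have hnp : n = pp := by omega
    subst hnp
    refine ⟨g, hg, ?_, heq⟩
    have : uu / g 0 = 1 := by
      refine tendsto_nhds_unique Tz ?_
      simp only [sub_self, zpow_zero]
      exact tendsto_const_nhds
    field_simp at this
    exact this.symm
  · exfalso
    have h0 : Tendsto (fun z : ℂ => z ^ ((n:ℤ) - pp)) (nhdsWithin 0 {(0:ℂ)}ᶜ) (nhds 0) := by
      have h1 : Tendsto (fun z : ℂ => z ^ ((n:ℤ) - pp).toNat) (nhds (0:ℂ)) (nhds 0) := by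
        have := (continuous_pow ((n:ℤ) - pp).toNat).tendsto (0:ℂ)
        rwa [zero_pow (by omega)] at this
      refine (h1.mono_left nhdsWithin_le_nhds).congr' ?_
      filter_upwards [eventually_mem_nhdsWithin] with z hz
      rw [← zpow_natCast, Int.toNat_of_nonneg hk.le]
    have := tendsto_nhds_unique Tz h0
    rw [div_eq_zero_iff] at this
    tauto

lemma wronskian_factor (S1 S2 f1 f2 : ℂ → ℂ) (p1 p2 : ℕ)
    (hf1 : AnalyticAt ℂ f1 0) (hf2 : AnalyticAt ℂ f2 0)
    (h1 : ∀ᶠ z in nhds (0:ℂ), S1 z = z ^ p1 * f1 z)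
    (h2 : ∀ᶠ z in nhds (0:ℂ), S2 z = z ^ p2 * f2 z) :
    ∃ K : ℂ → ℂ, ContinuousAt K 0 ∧ K 0 = ((p1:ℂ) - p2) * f1 0 * f2 0 ∧
      ∀ᶠ z in nhds (0:ℂ), z * (S2 z * deriv S1 z - S1 z * deriv S2 z)
        = z ^ (p1 + p2) * K z := by
  refine ⟨fun z => ((p1:ℂ) - p2) * f1 z * f2 z
      + z * (f2 z * deriv f1 z - f1 z * deriv f2 z), ?_, by simp, ?_⟩
  · have c1 := hf1.continuousAt
    have c2 := hf2.continuousAt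
    have d1 := (deriv_analyticAt_zero f1 hf1).continuousAt
    have d2 := (deriv_analyticAt_zero f2 hf2).continuousAt
    fun_prop
  · have hd1 : deriv S1 =ᶠ[nhds (0:ℂ)] deriv (fun z => z ^ p1 * f1 z) :=
      Filter.EventuallyEq.deriv h1
    have hd2 : deriv S2 =ᶠ[nhds (0:ℂ)] deriv (fun z => z ^ p2 * f2 z) :=
      Filter.EventuallyEq.deriv h2
    have hdf1 : ∀ᶠ z in nhds (0:ℂ), DifferentiableAt ℂ f1 z :=
      hf1.eventually_analyticAt.mono fun z hz => hz.differentiableAt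
    have hdf2 : ∀ᶠ z in nhds (0:ℂ), DifferentiableAt ℂ f2 z :=
      hf2.eventually_analyticAt.mono fun z hz => hz.differentiableAt
    filter_upwards [h1, h2, hd1, hd2, hdf1, hdf2] with z e1 e2 ed1 ed2 df1 df2
    have D1 : deriv (fun w => w ^ p1 * f1 w) z
        = (p1:ℂ) * z ^ (p1 - 1) * f1 z + z ^ p1 * deriv f1 z := by
      rw [deriv_fun_mul (differentiableAt_pow p1) df1, deriv_pow_field]
    have D2 : deriv (fun w => w ^ p2 * f2 w) z
        = (p2:ℂ) * z ^ (p2 - 1) * f2 z + z ^ p2 * deriv f2 z := by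
      rw [deriv_fun_mul (differentiableAt_pow p2) df2, deriv_pow_field]
    rw [e1, e2, ed1, ed2, D1, D2]
    have e3 := npow_helper p1 z
    have e4 := npow_helper p2 z
    rw [pow_add]
    linear_combination (z ^ p2 * f1 z * f2 z) * e3 - (z ^ p1 * f1 z * f2 z) * e4

lemma upper_of_factor (F g : ℂ → ℂ) (c : ℝ) (pp : ℕ) (hg : ContinuousAt g 0)
    (hgc : ‖g 0‖ ≤ c)
    (heq : ∀ᶠ z in nhds (0:ℂ), F z = z ^ pp * g z) :
    ∀ᶠ z in nhds (0:ℂ), ‖F z‖ ≤ (c + 1) * ‖z‖ ^ pp := by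
  have h1 : ∀ᶠ z in nhds (0:ℂ), dist (g z) (g 0) < 1 :=
    hg.tendsto (Metric.ball_mem_nhds _ one_pos)
  filter_upwards [heq, h1] with z hz hd
  rw [hz, norm_mul, norm_pow]
  have h3 : ‖g z‖ ≤ c + 1 := by
    have h2 : ‖g z‖ ≤ ‖g z - g 0‖ + ‖g 0‖ := by
      simpa using norm_add_le (g z - g 0) (g 0)
    rw [Complex.dist_eq] at hd
    linarith
  calc ‖z‖ ^ pp * ‖g z‖ ≤ ‖z‖ ^ pp * (c + 1) :=
        mul_le_mul_of_nonneg_left h3 (by positivity)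
    _ = (c + 1) * ‖z‖ ^ pp := mul_comm _ _

lemma lower_of_factor (F g : ℂ → ℂ) (pp : ℕ) (hg : ContinuousAt g 0)
    (heq : ∀ᶠ z in nhds (0:ℂ), F z = z ^ pp * g z) :
    ∀ᶠ z in nhds (0:ℂ), (‖g 0‖ / 2) * ‖z‖ ^ pp ≤ ‖F z‖ := by
  rcases eq_or_ne (g 0) 0 with h0 | h0
  · filter_upwards [heq] with z hz
    rw [h0]
    simp [apply_nonneg]
  · have hpos : 0 < ‖g 0‖ / 2 := by
      have := norm_pos_iff.mpr h0
      linarith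
    have h1 : ∀ᶠ z in nhds (0:ℂ), dist (g z) (g 0) < ‖g 0‖ / 2 :=
      hg.tendsto (Metric.ball_mem_nhds _ hpos)
    filter_upwards [heq, h1] with z hz hd
    rw [hz, norm_mul, norm_pow]
    have h2 : ‖g 0‖ ≤ ‖g 0 - g z‖ + ‖g z‖ := by
      simpa using norm_add_le (g 0 - g z) (g z)
    rw [Complex.dist_eq, ← norm_neg, neg_sub] at hd
    have h3 : ‖g 0‖ / 2 ≤ ‖g z‖ := by linarith
    calc (‖g 0‖ / 2) * ‖z‖ ^ pp
        ≤ ‖g z‖ * ‖z‖ ^ pp :=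
          mul_le_mul_of_nonneg_right h3 (by positivity)
      _ = ‖z‖ ^ pp * ‖g z‖ := mul_comm _ _

end helpers

end NewtonHelpers

set_option maxHeartbeats 1000000 in
/-- On the circle `|z| = t^{m_{α+1}}`, `ln h_t = 2 m_{α+1} ln(1/t) + O(1)`. -/
theorem log_density_on_circle
    (N : ℕ) (hN : 1 ≤ N)
    (S : ℕ → ℂ → ℂ) (u : ℕ → ℂ) (p : ℕ → ℕ) (q : ℕ → ℝ)
    (hSne : ∀ j ≤ N, ¬ (S j) =ᶠ[nhds (0 : ℂ)] 0)
    (hu : ∀ j ≤ N, u j ≠ 0)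
    (hord : ∀ j ≤ N,
      (fun z : ℂ => S j z - u j * z ^ p j) =O[nhds (0 : ℂ)] fun z : ℂ => z ^ (p j + 1))
    (hq0 : ∀ j ≤ N, 0 ≤ q j) (hqN : q N = 0)
    (M : ℕ) (P Q m : ℕ → ℝ)
    (hPmono : ∀ α < M, P α < P (α + 1))
    (hQmono : ∀ α < M, Q (α + 1) < Q α)
    (hvert : ∀ α ≤ M, ∃ j ≤ N, (p j : ℝ) = P α ∧ q j = Q α)
    (hm : ∀ α, 1 ≤ α → α ≤ M → m α = (Q (α - 1) - Q α) / (P α - P (α - 1)))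
    (hmdec : ∀ α, 1 ≤ α → α < M → m (α + 1) < m α)
    (hmpos : ∀ α, 1 ≤ α → α ≤ M → 0 < m α)
    (hmM : m (M + 1) = 0)
    (hdiag : ∀ j ≤ N, ∀ α, 1 ≤ α → α ≤ M →
      0 ≤ q j - Q α + m α * ((p j : ℝ) - P α))
    (hqQ : ∀ j ≤ N, Q M ≤ q j)
    (hpP : ∀ j ≤ N, P 0 ≤ (p j : ℝ))
    (hS : ∀ j ≤ N, AnalyticAt ℂ (S j) 0)
    (W : ℕ → ℕ → ℂ → ℂ)
    (hW : ∀ j k, W j k = fun z => S k z * deriv (S j) z - S j z * deriv (S k) z)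
    (hWne : ∃ r > (0 : ℝ), ∀ z ∈ Metric.ball (0 : ℂ) r, z ≠ 0 →
      ∃ j k, j < k ∧ k ≤ N ∧ W j k z ≠ 0)
    (D G h : ℝ → ℂ → ℝ)
    (hD : ∀ t z, D t z = ∑ j ∈ Finset.range (N + 1),
      t ^ (2 * q j) * ‖S j z‖ ^ 2)
    (hG : ∀ t z, G t z = ∑ j ∈ Finset.range (N + 1), ∑ k ∈ Finset.Ico (j + 1) (N + 1),
      t ^ (2 * (q j + q k)) * ‖W j k z‖ ^ 2)
    (hh : ∀ t z, h t z = G t z / (D t z) ^ 2)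
    (α : ℕ) (hαM : α ≤ M - 1) (hM : 1 ≤ M) :
    ∃ C > 0, ∃ t₀ ∈ Set.Ioo (0 : ℝ) 1, ∀ t ∈ Set.Ioo (0 : ℝ) t₀,
      ∀ z : ℂ, ‖z‖ = t ^ m (α + 1) →
        |Real.log (h t z) - 2 * m (α + 1) * Real.log (1 / t)| ≤ C := by
  -- basic index facts
  have hα1 : 1 ≤ α + 1 := Nat.le_add_left 1 α
  have hα1M : α + 1 ≤ M := by omega
  have hαle : α ≤ M := by omega
  set md := m (α + 1) with hmd
  have hm'pos : 0 < md := hmpos (α+1) hα1 hα1M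
  obtain ⟨ja, hjaN, hpja, hqja⟩ := hvert α hαle
  obtain ⟨jb, hjbN, hpjb, hqjb⟩ := hvert (α+1) hα1M
  have hPlt : P α < P (α+1) := hPmono α (by omega)
  have hpab : p ja < p jb := by
    have : (p ja : ℝ) < (p jb : ℝ) := by rw [hpja, hpjb]; exact hPlt
    exact_mod_cast this
  -- edge identity
  have hmval : md = (Q α - Q (α+1)) / (P (α+1) - P α) := by
    have := hm (α+1) hα1 hα1M
    simpa using this
  have hPne : P (α+1) - P α ≠ 0 := sub_ne_zero.mpr (ne_of_gt hPlt)
  have hedge : Q α + md * P α = Q (α+1) + md * P (α+1) := by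
    rw [hmval]
    field_simp
    ring
  set E := Q (α+1) + md * P (α+1) with hEdef
  have hmin : ∀ j, j ≤ N → E ≤ q j + md * (p j : ℝ) := by
    intro j hj
    have h1 := hdiag j hj (α+1) hα1 hα1M
    have h2 : m (α+1) * ((p j:ℝ) - P (α+1))
        = md * (p j:ℝ) - md * P (α+1) := by rw [← hmd]; ring
    rw [hEdef]
    linarith [h1, h2.symm.le, h2.le]
  -- factorizations
  have hfac : ∀ j, j ≤ N → ∃ g : ℂ → ℂ, AnalyticAt ℂ g 0 ∧ g 0 = u j ∧
      ∀ᶠ z in nhds (0:ℂ), S j z = z ^ p j * g z := fun j hj =>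
    factor_lead (S j) (u j) (p j) (hu j hj) (hS j hj) (hSne j hj) (hord j hj)
  choose! f hfa hf0 hfeq using hfac
  -- the two vertex indices ordered
  have hjab : ja ≠ jb := fun hEq => absurd (hEq ▸ hpab) (lt_irrefl _)
  obtain ⟨j0, k0, hj0k0, hj0N, hk0N, hqsum, hpsum, hpne⟩ :
      ∃ j0 k0, j0 < k0 ∧ j0 ≤ N ∧ k0 ≤ N ∧ q j0 + q k0 = Q α + Q (α+1) ∧
        (p j0 : ℝ) + (p k0 : ℝ) = P α + P (α+1) ∧ p j0 ≠ p k0 := by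
    rcases Nat.lt_or_ge ja jb with hlt | hge
    · exact ⟨ja, jb, hlt, hjaN, hjbN, by rw [hqja, hqjb], by rw [hpja, hpjb],
        Nat.ne_of_lt hpab⟩
    · have hlt : jb < ja := lt_of_le_of_ne hge (Ne.symm hjab)
      exact ⟨jb, ja, hlt, hjbN, hjaN, by rw [hqja, hqjb]; ring, by rw [hpja, hpjb]; ring,
        (Nat.ne_of_lt hpab).symm⟩
  -- Wronskian factorizations
  have hWfac : ∀ j k, j ≤ N → k ≤ N →
      ∃ K : ℂ → ℂ, ContinuousAt K 0 ∧ K 0 = ((p j:ℂ) - p k) * f j 0 * f k 0 ∧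
        ∀ᶠ z in nhds (0:ℂ), z * W j k z = z ^ (p j + p k) * K z := by
    intro j k hj hk
    obtain ⟨K, h1, h2, h3⟩ := wronskian_factor (S j) (S k) (f j) (f k) (p j) (p k)
      (hfa j hj) (hfa k hk) (hfeq j hj) (hfeq k hk)
    exact ⟨K, h1, h2, by rw [hW j k]; exact h3⟩
  choose! K hKc hK0 hKeq using hWfac
  -- the master eventual statement
  have hEv : ∀ᶠ z in nhds (0:ℂ),
      (∀ j ∈ Finset.range (N+1),
        ‖S j z‖ ≤ (‖u j‖ + 1) * ‖z‖ ^ p j) ∧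
      (∀ j ∈ Finset.range (N+1), ∀ k ∈ Finset.range (N+1),
        ‖z‖ * ‖W j k z‖
          ≤ (‖((p j:ℂ) - p k) * u j * u k‖ + 1) * ‖z‖ ^ (p j + p k)) ∧
      ((‖u ja‖ / 2) * ‖z‖ ^ p ja ≤ ‖S ja z‖) ∧
      ((‖((p j0:ℂ) - p k0) * u j0 * u k0‖ / 2) * ‖z‖ ^ (p j0 + p k0)
          ≤ ‖z‖ * ‖W j0 k0 z‖) := by
    refine Filter.Eventually.and ?_ (Filter.Eventually.and ?_ (Filter.Eventually.and ?_ ?_))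
    · rw [Filter.eventually_all_finset]
      intro j hj
      have hjN : j ≤ N := Finset.mem_range_succ_iff.mp hj
      exact upper_of_factor (S j) (f j) (‖u j‖) (p j)
        (hfa j hjN).continuousAt (le_of_eq (by rw [hf0 j hjN])) (hfeq j hjN)
    · rw [Filter.eventually_all_finset]
      intro j hj
      rw [Filter.eventually_all_finset]
      intro k hk
      have hjN : j ≤ N := Finset.mem_range_succ_iff.mp hj
      have hkN : k ≤ N := Finset.mem_range_succ_iff.mp hk
      have := upper_of_factor (fun z => z * W j k z) (K j k)
        (‖((p j:ℂ) - p k) * u j * u k‖) (p j + p k)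
        (hKc j k hjN hkN)
        (le_of_eq (by rw [hK0 j k hjN hkN, hf0 j hjN, hf0 k hkN]))
        (hKeq j k hjN hkN)
      filter_upwards [this] with z hz
      rw [← norm_mul]
      exact hz
    · have := lower_of_factor (S ja) (f ja) (p ja) (hfa ja hjaN).continuousAt (hfeq ja hjaN)
      rw [hf0 ja hjaN] at this
      exact this
    · have := lower_of_factor (fun z => z * W j0 k0 z) (K j0 k0) (p j0 + p k0)
        (hKc j0 k0 hj0N hk0N) (hKeq j0 k0 hj0N hk0N)
      rw [hK0 j0 k0 hj0N hk0N, hf0 j0 hj0N, hf0 k0 hk0N] at this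
      filter_upwards [this] with z hz
      rw [← norm_mul]
      exact hz
  rw [Metric.eventually_nhds_iff] at hEv
  obtain ⟨r, hr0, hball⟩ := hEv
  -- constants
  set cD : ℝ := (‖u ja‖ / 2)^2 with hcDdef
  have hcD : 0 < cD := by
    rw [hcDdef]
    have := norm_pos_iff.mpr (hu ja hjaN)
    positivity
  set CD : ℝ := ∑ j ∈ Finset.range (N+1), (‖u j‖ + 1)^2 with hCDdef
  have hCD : 0 < CD := by
    refine Finset.sum_pos (fun j _ => by positivity) ⟨0, by simp⟩
  set cW0 : ℝ := ‖((p j0:ℂ) - p k0) * u j0 * u k0‖ with hcW0def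
  have hcW0 : 0 < cW0 := by
    refine norm_pos_iff.mpr ?_
    refine mul_ne_zero (mul_ne_zero ?_ (hu j0 hj0N)) (hu k0 hk0N)
    rw [sub_ne_zero]
    exact_mod_cast hpne
  set cG : ℝ := (cW0 / 2)^2 with hcGdef
  have hcG : 0 < cG := by rw [hcGdef]; positivity
  set CG : ℝ := (∑ j ∈ Finset.range (N+1), ∑ k ∈ Finset.Ico (j+1) (N+1),
      (‖((p j:ℂ) - p k) * u j * u k‖ + 1)^2) + 1 with hCGdef
  have hCG : 0 < CG := by
    have : (0:ℝ) ≤ ∑ j ∈ Finset.range (N+1), ∑ k ∈ Finset.Ico (j+1) (N+1),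
        (‖((p j:ℂ) - p k) * u j * u k‖ + 1)^2 :=
      Finset.sum_nonneg fun j _ => Finset.sum_nonneg fun k _ => by positivity
    linarith
  set A : ℝ := cG / CD^2 with hAdef
  set B : ℝ := CG / cD^2 with hBdef
  have hA : 0 < A := div_pos hcG (pow_pos hCD 2)
  have hB : 0 < B := div_pos hCG (pow_pos hcD 2)
  -- t₀
  set r' : ℝ := min r 1 with hr'def
  have hr'0 : 0 < r' := lt_min hr0 one_pos
  set t₀ : ℝ := min (r' ^ md⁻¹) (1/2) with ht₀def
  have ht₀0 : 0 < t₀ := lt_min (Real.rpow_pos_of_pos hr'0 _) (by norm_num)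
  have ht₀1 : t₀ < 1 := lt_of_le_of_lt (min_le_right _ _) (by norm_num)
  refine ⟨|Real.log A| + |Real.log B| + 1, by positivity, t₀, ⟨ht₀0, ht₀1⟩, ?_⟩
  rintro t ⟨ht0, htt₀⟩ z hz
  have ht1 : t < 1 := htt₀.trans ht₀1
  have hτpos : 0 < t ^ md := Real.rpow_pos_of_pos ht0 _
  have hτr : t ^ md < r := by
    have h1 : t < r' ^ md⁻¹ := lt_of_lt_of_le htt₀ (min_le_left _ _)
    have h2 : t ^ md < (r' ^ md⁻¹) ^ md := Real.rpow_lt_rpow ht0.le h1 hm'pos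
    rw [← Real.rpow_mul hr'0.le, inv_mul_cancel₀ (ne_of_gt hm'pos), Real.rpow_one] at h2
    exact lt_of_lt_of_le h2 (min_le_left _ _)
  have hzr : dist z 0 < r := by
    rw [Complex.dist_eq, sub_zero, hz]
    exact hτr
  obtain ⟨hSub, hWub, hSlb, hWlb⟩ := hball hzr
  have habsz : ∀ n : ℕ, ‖z‖ ^ n = t ^ (md * n) := by
    intro n
    rw [hz, ← Real.rpow_natCast (t ^ md) n, ← Real.rpow_mul ht0.le]
  -- D bounds
  have hDle : D t z ≤ CD * t ^ (2*E) := by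
    rw [hD, hCDdef, Finset.sum_mul]
    refine Finset.sum_le_sum ?_
    intro j hj
    have hjN := Finset.mem_range_succ_iff.mp hj
    have h1 : ‖S j z‖ ≤ (‖u j‖ + 1) * t ^ (md * p j) := by
      have := hSub j hj; rwa [habsz] at this
    have h2 : ‖S j z‖^2 ≤ ((‖u j‖ + 1) * t ^ (md * p j))^2 :=
      pow_le_pow_left₀ (norm_nonneg _) h1 2
    have h3 : t^(2*q j) * ((‖u j‖ + 1) * t^(md * p j))^2
        = (‖u j‖ + 1)^2 * t^(2*q j + 2*(md * p j)) := by
      rw [mul_pow, rpow_sq' t _ ht0, Real.rpow_add ht0]; ring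
    calc t^(2*q j) * ‖S j z‖^2
        ≤ t^(2*q j) * ((‖u j‖ + 1) * t^(md * p j))^2 :=
          mul_le_mul_of_nonneg_left h2 (Real.rpow_nonneg ht0.le _)
      _ = (‖u j‖ + 1)^2 * t^(2*q j + 2*(md * p j)) := h3
      _ ≤ (‖u j‖ + 1)^2 * t^(2*E) := by
          refine mul_le_mul_of_nonneg_left ?_ (by positivity)
          refine Real.rpow_le_rpow_of_exponent_ge ht0 ht1.le ?_
          linarith [hmin j hjN]
  have hDge : cD * t ^ (2*E) ≤ D t z := by
    rw [hD]
    have h1 : (‖u ja‖/2) * t^(md * p ja) ≤ ‖S ja z‖ := by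
      have := hSlb; rwa [habsz] at this
    have h2 : ((‖u ja‖/2) * t^(md * p ja))^2 ≤ ‖S ja z‖^2 :=
      pow_le_pow_left₀ (by positivity) h1 2
    have hexp : 2*q ja + 2*(md * (p ja:ℝ)) = 2*E := by
      rw [hqja, hpja, hEdef]; linarith [hedge]
    have h3 : cD * t^(2*E) = t^(2*q ja) * ((‖u ja‖/2) * t^(md * p ja))^2 := by
      rw [hcDdef, mul_pow, rpow_sq' t _ ht0, ← hexp, Real.rpow_add ht0]; ring
    rw [h3]
    refine le_trans (mul_le_mul_of_nonneg_left h2 (Real.rpow_nonneg ht0.le _)) ?_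
    exact Finset.single_le_sum (f := fun j => t^(2*q j) * ‖S j z‖^2)
      (fun i _ => by positivity) (Finset.mem_range_succ_iff.mpr hjaN)
  -- G bounds
  have hGle : G t z ≤ CG * t ^ (4*E - 2*md) := by
    rw [hG]
    have key : ∀ j ∈ Finset.range (N+1), ∀ k ∈ Finset.Ico (j+1) (N+1),
        t ^ (2*(q j + q k)) * ‖W j k z‖^2
          ≤ (‖((p j:ℂ) - p k) * u j * u k‖ + 1)^2 * t^(4*E - 2*md) := by
      intro j hj k hk
      have hjN := Finset.mem_range_succ_iff.mp hj
      have hkN : k ≤ N := by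
        have := (Finset.mem_Ico.mp hk).2; omega
      have hkr : k ∈ Finset.range (N+1) := Finset.mem_range_succ_iff.mpr hkN
      have h1 := hWub j hj k hkr
      rw [habsz, hz] at h1
      set Cjk := ‖((p j:ℂ) - p k) * u j * u k‖ + 1 with hCjk
      have h2 : ‖W j k z‖ ≤ Cjk * t ^ (md * ((p j + p k : ℕ) : ℝ) - md) := by
        rw [Real.rpow_sub ht0, ← mul_div_assoc, le_div_iff₀ hτpos]
        exact le_of_eq_of_le (mul_comm (‖W j k z‖) (t ^ md)) h1
      have h3 : ‖W j k z‖^2 ≤ (Cjk * t ^ (md * ((p j + p k : ℕ) : ℝ) - md))^2 :=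
        pow_le_pow_left₀ (norm_nonneg _) h2 2
      have h4 : t^(2*(q j + q k)) * (Cjk * t^(md * ((p j + p k : ℕ) : ℝ) - md))^2
          = Cjk^2 * t^(2*(q j + q k) + 2*(md * ((p j + p k : ℕ) : ℝ) - md)) := by
        rw [mul_pow, rpow_sq' t _ ht0, Real.rpow_add ht0]; ring
      calc t^(2*(q j + q k)) * ‖W j k z‖^2
          ≤ t^(2*(q j + q k)) * (Cjk * t^(md * ((p j + p k : ℕ) : ℝ) - md))^2 :=
            mul_le_mul_of_nonneg_left h3 (Real.rpow_nonneg ht0.le _)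
        _ = Cjk^2 * t^(2*(q j + q k) + 2*(md * ((p j + p k : ℕ) : ℝ) - md)) := h4
        _ ≤ Cjk^2 * t^(4*E - 2*md) := by
            refine mul_le_mul_of_nonneg_left ?_ (by positivity)
            refine Real.rpow_le_rpow_of_exponent_ge ht0 ht1.le ?_
            have e1 := hmin j hjN
            have e2 := hmin k hkN
            have e3 : md * (((p j + p k : ℕ)) : ℝ) = md * (p j : ℝ) + md * (p k : ℝ) := by
              push_cast; ring
            linarith [e1, e2, e3]
    calc (∑ j ∈ Finset.range (N+1), ∑ k ∈ Finset.Ico (j+1) (N+1),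
          t ^ (2*(q j + q k)) * ‖W j k z‖^2)
        ≤ ∑ j ∈ Finset.range (N+1), ∑ k ∈ Finset.Ico (j+1) (N+1),
          (‖((p j:ℂ) - p k) * u j * u k‖ + 1)^2 * t^(4*E - 2*md) := by
          refine Finset.sum_le_sum fun j hj => Finset.sum_le_sum fun k hk => key j hj k hk
      _ = (∑ j ∈ Finset.range (N+1), ∑ k ∈ Finset.Ico (j+1) (N+1),
          (‖((p j:ℂ) - p k) * u j * u k‖ + 1)^2) * t^(4*E - 2*md) := by
          rw [Finset.sum_mul]
          refine Finset.sum_congr rfl fun j _ => ?_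
          rw [Finset.sum_mul]
      _ ≤ CG * t^(4*E - 2*md) := by
          refine mul_le_mul_of_nonneg_right ?_ (Real.rpow_nonneg ht0.le _)
          rw [hCGdef]; linarith
  have hGge : cG * t ^ (4*E - 2*md) ≤ G t z := by
    rw [hG]
    have h1 := hWlb
    rw [habsz, hz] at h1
    have h2 : (cW0/2) * t ^ (md * ((p j0 + p k0 : ℕ) : ℝ) - md) ≤ ‖W j0 k0 z‖ := by
      rw [Real.rpow_sub ht0, ← mul_div_assoc, div_le_iff₀ hτpos]
      exact h1.trans_eq (mul_comm _ _)
    have h3 : ((cW0/2) * t ^ (md * ((p j0 + p k0 : ℕ) : ℝ) - md))^2 ≤ ‖W j0 k0 z‖^2 :=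
      pow_le_pow_left₀ (by positivity) h2 2
    have hexp : 2*(q j0 + q k0) + 2*(md * ((p j0 + p k0 : ℕ) : ℝ) - md) = 4*E - 2*md := by
      have hc : ((p j0 + p k0 : ℕ) : ℝ) = (p j0 : ℝ) + (p k0 : ℝ) := by push_cast; ring
      rw [hc, hqsum, hpsum, hEdef]
      linear_combination (2:ℝ) * (hedge.trans hEdef)
    have h4 : cG * t^(4*E - 2*md)
        = t^(2*(q j0 + q k0)) * ((cW0/2) * t ^ (md * ((p j0 + p k0 : ℕ) : ℝ) - md))^2 := by
      rw [hcGdef, mul_pow, rpow_sq' t _ ht0, ← hexp, Real.rpow_add ht0]; ring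
    rw [h4]
    have h5 : t^(2*(q j0 + q k0)) * ((cW0/2) * t ^ (md * ((p j0 + p k0 : ℕ) : ℝ) - md))^2
        ≤ t^(2*(q j0 + q k0)) * ‖W j0 k0 z‖^2 :=
      mul_le_mul_of_nonneg_left h3 (Real.rpow_nonneg ht0.le _)
    refine le_trans h5 ?_
    have hmem0 : j0 ∈ Finset.range (N+1) := Finset.mem_range_succ_iff.mpr hj0N
    have hmem1 : k0 ∈ Finset.Ico (j0+1) (N+1) := Finset.mem_Ico.mpr ⟨hj0k0, by omega⟩
    have hinner : t^(2*(q j0 + q k0)) * ‖W j0 k0 z‖^2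
        ≤ ∑ k ∈ Finset.Ico (j0+1) (N+1), t^(2*(q j0 + q k)) * ‖W j0 k z‖^2 :=
      Finset.single_le_sum (f := fun k => t^(2*(q j0 + q k)) * ‖W j0 k z‖^2)
        (fun i _ => by positivity) hmem1
    refine le_trans hinner ?_
    exact Finset.single_le_sum
      (f := fun j => ∑ k ∈ Finset.Ico (j+1) (N+1), t^(2*(q j + q k)) * ‖W j k z‖^2)
      (fun i _ => Finset.sum_nonneg fun k _ => by positivity) hmem0
  -- h bounds
  have hrpos : ∀ x : ℝ, 0 < t ^ x := fun x => Real.rpow_pos_of_pos ht0 x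
  have hDpos : 0 < D t z := lt_of_lt_of_le (mul_pos hcD (hrpos _)) hDge
  have hhub : h t z ≤ B * t ^ (-(2*md)) := by
    rw [hh]
    have hD2 : (cD * t^(2*E))^2 ≤ (D t z)^2 :=
      pow_le_pow_left₀ (mul_nonneg hcD.le (hrpos _).le) hDge 2
    have hstep : G t z / (D t z)^2 ≤ (CG * t^(4*E - 2*md)) / ((cD * t^(2*E))^2) :=
      div_le_div₀ (mul_nonneg hCG.le (hrpos _).le) hGle (pow_pos (mul_pos hcD (hrpos _)) 2) hD2
    refine le_trans hstep (le_of_eq ?_)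
    rw [div_rpow_helper t CG cD (4*E-2*md) (2*E) ht0 (ne_of_gt hcD), hBdef]
    have hexp2 : (4*E-2*md) - 2*(2*E) = -(2*md) := by ring
    rw [hexp2]
  have hhlb : A * t ^ (-(2*md)) ≤ h t z := by
    rw [hh]
    have hGpos : 0 < G t z := lt_of_lt_of_le (mul_pos hcG (hrpos _)) hGge
    have hD2 : (D t z)^2 ≤ (CD * t^(2*E))^2 := pow_le_pow_left₀ hDpos.le hDle 2
    have hstep : (cG * t^(4*E - 2*md)) / ((CD * t^(2*E))^2) ≤ G t z / (D t z)^2 :=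
      div_le_div₀ hGpos.le hGge (pow_pos hDpos 2) hD2
    refine le_trans (le_of_eq ?_) hstep
    rw [div_rpow_helper t cG CD (4*E-2*md) (2*E) ht0 (ne_of_gt hCD), hAdef]
    have hexp2 : (4*E-2*md) - 2*(2*E) = -(2*md) := by ring
    rw [hexp2]
  have hhpos : 0 < h t z := lt_of_lt_of_le (mul_pos hA (hrpos _)) hhlb
  have hmulpos : 0 < t ^ (2*md) := Real.rpow_pos_of_pos ht0 _
  have hyA : A ≤ h t z * t^(2*md) := by
    have h1 := mul_le_mul_of_nonneg_right hhlb hmulpos.le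
    rw [mul_assoc, ← Real.rpow_add ht0] at h1
    simpa using h1
  have hyB : h t z * t^(2*md) ≤ B := by
    have h1 := mul_le_mul_of_nonneg_right hhub hmulpos.le
    rw [mul_assoc, ← Real.rpow_add ht0] at h1
    simpa using h1
  have hlog : Real.log (h t z) - 2 * md * Real.log (1/t)
      = Real.log (h t z * t^(2*md)) := by
    rw [Real.log_mul (ne_of_gt hhpos) (ne_of_gt hmulpos), Real.log_rpow ht0, one_div,
      Real.log_inv]
    ring
  rw [hlog, abs_le]
  constructor
  · have h1 : Real.log A ≤ Real.log (h t z * t^(2*md)) := Real.log_le_log hA hyA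
    have h2 := neg_abs_le (Real.log A)
    have h3 := abs_nonneg (Real.log B)
    linarith
  · have h1 : Real.log (h t z * t^(2*md)) ≤ Real.log B :=
      Real.log_le_log (lt_of_lt_of_le hA hyA) hyB
    have h2 := le_abs_self (Real.log B)
    have h3 := abs_nonneg (Real.log A)
    linarith
end

section
/- Under the Newton diagram setup, fix α with 0 ≤ α ≤ M − 1. Then there exist C > 0 and t₀ ∈ (0,1) such that for all t ∈ (0, t₀) and all z with |z| = t^{m_{α+1}}: | ψ_t(z) + 2 (Q_α + m_{α+1} P_α) ln(1/t) | ≤ C. -/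
open scoped Classical BigOperators


lemma aux_upper (S : ℂ → ℂ) (u : ℂ) (p : ℕ)
    (h : (fun z : ℂ => S z - u * z ^ p) =O[nhds (0:ℂ)] fun z : ℂ => z ^ (p+1)) :
    ∃ δ > 0, ∃ C > 0, ∀ z : ℂ, ‖z‖ ≤ δ →
      ‖S z‖ ≤ C * ‖z‖ ^ p := by
  obtain ⟨c, hc0, hc⟩ := h.exists_pos
  rw [Asymptotics.isBigOWith_iff, Metric.eventually_nhds_iff] at hc
  obtain ⟨δ, hδ0, hδ⟩ := hc
  refine ⟨δ/2, by positivity, ‖u‖ + c * δ + 1, by positivity, ?_⟩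
  intro z hz
  have h1 := hδ (y := z) (by simpa [Complex.dist_eq] using lt_of_le_of_lt hz (by linarith))
  simp only [norm_pow] at h1
  have h2 : ‖S z‖ ≤ ‖u * z ^ p‖ + ‖S z - u * z ^ p‖ := by
    calc ‖S z‖ = ‖u * z ^ p + (S z - u * z ^ p)‖ := by ring_nf
      _ ≤ _ := norm_add_le _ _
  rw [norm_mul, norm_pow] at h2
  have h3 : ‖z‖ ^ (p + 1) = ‖z‖ ^ p * ‖z‖ := pow_succ _ _
  have h4 : ‖z‖ ^ p * ‖z‖ ≤ ‖z‖ ^ p * δ := by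
    have : (0:ℝ) ≤ ‖z‖ ^ p := by positivity
    nlinarith [hz, hδ0]
  nlinarith [h1, h2, pow_nonneg (norm_nonneg z) p, norm_nonneg (S z - u * z ^ p)]

lemma aux_lower (S : ℂ → ℂ) (u : ℂ) (p : ℕ) (hu : u ≠ 0)
    (h : (fun z : ℂ => S z - u * z ^ p) =O[nhds (0:ℂ)] fun z : ℂ => z ^ (p+1)) :
    ∃ δ > 0, ∀ z : ℂ, ‖z‖ ≤ δ →
      ‖u‖ / 2 * ‖z‖ ^ p ≤ ‖S z‖ := by
  obtain ⟨c, hc0, hc⟩ := h.exists_pos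
  rw [Asymptotics.isBigOWith_iff, Metric.eventually_nhds_iff] at hc
  obtain ⟨δ, hδ0, hδ⟩ := hc
  have hu0 : 0 < ‖u‖ := norm_pos_iff.mpr hu
  refine ⟨min (δ/2) (‖u‖ / (2*c)), by positivity, ?_⟩
  intro z hz
  have hz1 : ‖z‖ ≤ δ/2 := le_trans hz (min_le_left _ _)
  have hz2 : ‖z‖ ≤ ‖u‖ / (2*c) := le_trans hz (min_le_right _ _)
  have h1 := hδ (y := z) (by simpa [Complex.dist_eq] using lt_of_le_of_lt hz1 (by linarith))
  simp only [norm_pow] at h1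
  have h2 : ‖u‖ * ‖z‖ ^ p - ‖S z - u * z ^ p‖
      ≤ ‖S z‖ := by
    have h := norm_sub_norm_le (u * z ^ p) (S z)
    rw [norm_sub_rev] at h
    simp only [norm_mul, norm_pow] at h
    linarith
  have h3 : ‖z‖ ^ (p + 1) = ‖z‖ ^ p * ‖z‖ := pow_succ _ _
  have h5 : c * ‖z‖ ≤ ‖u‖ / 2 := by
    calc c * ‖z‖ ≤ c * (‖u‖ / (2*c)) := by nlinarith
      _ = ‖u‖ / 2 := by field_simp
  nlinarith [h1, h2, pow_nonneg (norm_nonneg z) p]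
/-- On the circle `|z| = t^{m_{α+1}}`, `ψ_t = -2(Q_α + m_{α+1} P_α) ln(1/t) + O(1)`. -/
theorem psi_on_circle
    (N : ℕ) (hN : 1 ≤ N)
    (S : ℕ → ℂ → ℂ) (u : ℕ → ℂ) (p : ℕ → ℕ) (q : ℕ → ℝ)
    (hSne : ∀ j ≤ N, ¬ (S j) =ᶠ[nhds (0 : ℂ)] 0)
    (hu : ∀ j ≤ N, u j ≠ 0)
    (hord : ∀ j ≤ N,
      (fun z : ℂ => S j z - u j * z ^ p j) =O[nhds (0 : ℂ)] fun z : ℂ => z ^ (p j + 1))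
    (hq0 : ∀ j ≤ N, 0 ≤ q j) (hqN : q N = 0)
    (M : ℕ) (P Q m : ℕ → ℝ)
    (hPmono : ∀ α < M, P α < P (α + 1))
    (hQmono : ∀ α < M, Q (α + 1) < Q α)
    (hvert : ∀ α ≤ M, ∃ j ≤ N, (p j : ℝ) = P α ∧ q j = Q α)
    (hm : ∀ α, 1 ≤ α → α ≤ M → m α = (Q (α - 1) - Q α) / (P α - P (α - 1)))
    (hmdec : ∀ α, 1 ≤ α → α < M → m (α + 1) < m α)
    (hmpos : ∀ α, 1 ≤ α → α ≤ M → 0 < m α)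
    (hmM : m (M + 1) = 0)
    (hdiag : ∀ j ≤ N, ∀ α, 1 ≤ α → α ≤ M →
      0 ≤ q j - Q α + m α * ((p j : ℝ) - P α))
    (hqQ : ∀ j ≤ N, Q M ≤ q j)
    (hpP : ∀ j ≤ N, P 0 ≤ (p j : ℝ))
    (hS : ∀ j ≤ N, AnalyticAt ℂ (S j) 0)
    (D : ℝ → ℂ → ℝ) (ψ : ℝ → ℂ → ℝ)
    (hD : ∀ t z, D t z = ∑ j ∈ Finset.range (N + 1),
      t ^ (2 * q j) * ‖S j z‖ ^ 2)
    (hψ : ∀ t z, ψ t z = Real.log (D t z))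
    (α : ℕ) (hαM : α ≤ M - 1) (hM : 1 ≤ M) :
    ∃ C > 0, ∃ t₀ ∈ Set.Ioo (0 : ℝ) 1, ∀ t ∈ Set.Ioo (0 : ℝ) t₀,
      ∀ z : ℂ, ‖z‖ = t ^ m (α + 1) →
        |ψ t z + 2 * (Q α + m (α + 1) * P α) * Real.log (1 / t)| ≤ C := by

  -- basic index facts
  have hαM' : α < M := lt_of_le_of_lt hαM (Nat.sub_lt hM one_pos)
  have hα1M : α + 1 ≤ M := hαM'
  have hμpos : 0 < m (α + 1) := hmpos _ (by omega) hα1M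
  set μ := m (α + 1) with hμdef
  have hPlt : P α < P (α + 1) := hPmono α hαM'
  have hmeq : μ * (P (α + 1) - P α) = Q α - Q (α + 1) := by
    have h := hm (α + 1) (by omega) hα1M
    rw [Nat.add_sub_cancel] at h
    rw [hμdef, h, div_mul_cancel₀]
    exact sub_ne_zero.mpr (ne_of_gt hPlt)
  set E : ℝ := Q α + μ * P α with hEdef
  have hexp : ∀ j ≤ N, E ≤ q j + μ * (p j : ℝ) := by
    intro j hj
    have h1 := hdiag j hj (α + 1) (by omega) hα1M
    rw [hEdef]; nlinarith [h1, hmeq]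
  -- uniform upper bounds
  have bound : ∀ j, j ≤ N → ∃ δ > 0, ∃ C > 0, ∀ z : ℂ, ‖z‖ ≤ δ →
      ‖S j z‖ ≤ C * ‖z‖ ^ (p j) :=
    fun j hj => aux_upper (S j) (u j) (p j) (hord j hj)
  choose! δf hδf Cf hCf hfb using bound
  -- vertex and lower bound
  obtain ⟨j₀, hj₀N, hpj₀, hqj₀⟩ := hvert α (le_of_lt hαM')
  obtain ⟨δℓ, hδℓ0, hlow⟩ := aux_lower (S j₀) (u j₀) (p j₀) (hu j₀ hj₀N) (hord j₀ hj₀N)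
  set ε := ‖u j₀‖ / 2 with hεdef
  have hε0 : 0 < ε := by
    have := norm_pos_iff.mpr (hu j₀ hj₀N)
    positivity
  -- finset min/max
  set s := Finset.range (N + 1) with hsdef
  have hsne : s.Nonempty := ⟨0, by simp [hsdef]⟩
  set δm := s.inf' hsne δf with hδmdef
  have hδm0 : 0 < δm := by
    rw [hδmdef, Finset.lt_inf'_iff]
    intro j hjs
    exact hδf j (Nat.lt_succ_iff.mp (by simpa [hsdef] using hjs))
  set Cm := s.sup' hsne Cf with hCmdef
  have hCm0 : 0 < Cm :=
    lt_of_lt_of_le (hCf 0 (by omega)) (Finset.le_sup' Cf (by simp [hsdef]))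
  set δ := min δm δℓ with hδdef
  have hδ0 : 0 < δ := lt_min hδm0 hδℓ0
  set K : ℝ := (N + 1 : ℝ) * Cm ^ 2 with hKdef
  have hK0 : 0 < K := by positivity
  refine ⟨|Real.log (ε ^ 2)| + |Real.log K| + 1, by positivity,
    min (1/2) (δ ^ (1/μ)), ⟨⟨?_, ?_⟩, ?_⟩⟩
  · have : (0:ℝ) < δ ^ (1/μ) := Real.rpow_pos_of_pos hδ0 _
    exact lt_min (by norm_num) this
  · exact lt_of_le_of_lt (min_le_left _ _) (by norm_num)
  intro t ht z hz
  obtain ⟨ht0, htlt⟩ := ht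
  have ht1 : t < 1 := lt_of_lt_of_le (lt_of_lt_of_le htlt (min_le_left _ _)) (by norm_num)
  have htδ : t ^ μ ≤ δ := by
    have h1 : t < δ ^ (1/μ) := lt_of_lt_of_le htlt (min_le_right _ _)
    have h2 : t ^ μ < (δ ^ (1/μ)) ^ μ := Real.rpow_lt_rpow ht0.le h1 hμpos
    rw [← Real.rpow_mul hδ0.le, one_div, inv_mul_cancel₀ (ne_of_gt hμpos),
      Real.rpow_one] at h2
    exact h2.le
  have hr0 : 0 < t ^ μ := Real.rpow_pos_of_pos ht0 _
  -- power manipulation lemma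
  have hpow : ∀ (n : ℕ) (a : ℝ), t ^ a * (t ^ μ) ^ n = t ^ (a + μ * (n : ℝ)) := by
    intro n a
    rw [← Real.rpow_natCast (t ^ μ) n, ← Real.rpow_mul ht0.le, ← Real.rpow_add ht0]
  -- upper bound on D
  have hterm : ∀ j ∈ s, t ^ (2 * q j) * ‖S j z‖ ^ 2 ≤ Cm ^ 2 * t ^ (2 * E) := by
    intro j hjs
    have hjN : j ≤ N := Nat.lt_succ_iff.mp (by simpa [hsdef] using hjs)
    have hzδ : ‖z‖ ≤ δf j := by
      rw [hz]
      exact le_trans htδ (le_trans (min_le_left _ _) (Finset.inf'_le δf hjs))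
    have h1 : ‖S j z‖ ≤ Cm * (t ^ μ) ^ (p j) := by
      calc ‖S j z‖ ≤ Cf j * ‖z‖ ^ (p j) := hfb j hjN z hzδ
        _ ≤ Cm * (t ^ μ) ^ (p j) := by
            rw [hz]
            exact mul_le_mul_of_nonneg_right (Finset.le_sup' Cf hjs) (by positivity)
    have h2 : ‖S j z‖ ^ 2 ≤ Cm ^ 2 * ((t ^ μ) ^ (p j)) ^ 2 := by
      rw [← mul_pow]
      exact pow_le_pow_left₀ (norm_nonneg _) h1 2
    have h3 : t ^ (2 * q j) * (Cm ^ 2 * ((t ^ μ) ^ (p j)) ^ 2)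
        = Cm ^ 2 * t ^ (2 * q j + μ * ((p j * 2 : ℕ) : ℝ)) := by
      rw [← pow_mul, ← hpow (p j * 2) (2 * q j)]; ring
    have h4 : t ^ (2 * q j + μ * ((p j * 2 : ℕ) : ℝ)) ≤ t ^ (2 * E) := by
      apply Real.rpow_le_rpow_of_exponent_ge ht0 ht1.le
      have := hexp j hjN
      push_cast
      nlinarith
    calc t ^ (2 * q j) * ‖S j z‖ ^ 2
        ≤ t ^ (2 * q j) * (Cm ^ 2 * ((t ^ μ) ^ (p j)) ^ 2) := by
          exact mul_le_mul_of_nonneg_left h2 (Real.rpow_nonneg ht0.le _)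
      _ = Cm ^ 2 * t ^ (2 * q j + μ * ((p j * 2 : ℕ) : ℝ)) := h3
      _ ≤ Cm ^ 2 * t ^ (2 * E) := mul_le_mul_of_nonneg_left h4 (by positivity)
  have hDhigh : D t z ≤ K * t ^ (2 * E) := by
    rw [hD]
    calc ∑ j ∈ Finset.range (N + 1), t ^ (2 * q j) * ‖S j z‖ ^ 2
        ≤ ∑ _j ∈ Finset.range (N + 1), Cm ^ 2 * t ^ (2 * E) :=
          Finset.sum_le_sum hterm
      _ = K * t ^ (2 * E) := by
          rw [Finset.sum_const, Finset.card_range, nsmul_eq_mul, hKdef]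
          push_cast; ring
  -- lower bound on D
  have hj₀s : j₀ ∈ s := by simp [hsdef, Nat.lt_succ_of_le hj₀N]
  have hzδℓ : ‖z‖ ≤ δℓ := by
    rw [hz]; exact le_trans htδ (min_le_right _ _)
  have hlow1 : ε ^ 2 * t ^ (2 * E) ≤ t ^ (2 * q j₀) * ‖S j₀ z‖ ^ 2 := by
    have h1 : ε * ‖z‖ ^ (p j₀) ≤ ‖S j₀ z‖ := hlow z hzδℓ
    have h2 : (ε * ‖z‖ ^ (p j₀)) ^ 2 ≤ ‖S j₀ z‖ ^ 2 :=
      pow_le_pow_left₀ (by positivity) h1 2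
    have h3 : t ^ (2 * q j₀) * (ε * ‖z‖ ^ (p j₀)) ^ 2 = ε ^ 2 * t ^ (2 * E) := by
      rw [hz, mul_pow, ← pow_mul, ← mul_assoc, mul_comm (t ^ (2 * q j₀)) (ε ^ 2),
        mul_assoc, hpow (p j₀ * 2) (2 * q j₀)]
      congr 1
      rw [hqj₀, hEdef]
      push_cast
      rw [hpj₀]
      ring
    calc ε ^ 2 * t ^ (2 * E) = t ^ (2 * q j₀) * (ε * ‖z‖ ^ (p j₀)) ^ 2 := h3.symm
      _ ≤ t ^ (2 * q j₀) * ‖S j₀ z‖ ^ 2 :=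
          mul_le_mul_of_nonneg_left h2 (Real.rpow_nonneg ht0.le _)
  have hDlow : ε ^ 2 * t ^ (2 * E) ≤ D t z := by
    rw [hD]
    refine le_trans hlow1 (Finset.single_le_sum (f := fun j =>
      t ^ (2 * q j) * ‖S j z‖ ^ 2) ?_ hj₀s)
    intro i _
    positivity
  have hDpos : 0 < D t z := lt_of_lt_of_le (by positivity) hDlow
  -- log estimates
  have hrE : 0 < t ^ (2 * E) := Real.rpow_pos_of_pos ht0 _
  have hlog1 : Real.log (ε ^ 2) + 2 * E * Real.log t ≤ Real.log (D t z) := by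
    have := Real.log_le_log (by positivity) hDlow
    rwa [Real.log_mul (by positivity) (ne_of_gt hrE), Real.log_rpow ht0] at this
  have hlog2 : Real.log (D t z) ≤ Real.log K + 2 * E * Real.log t := by
    have := Real.log_le_log hDpos hDhigh
    rwa [Real.log_mul (ne_of_gt hK0) (ne_of_gt hrE), Real.log_rpow ht0] at this
  rw [hψ, one_div, Real.log_inv]
  rw [abs_le]
  constructor
  · have := neg_abs_le (Real.log (ε ^ 2))
    have h2 := abs_nonneg (Real.log K)
    linarith [hlog1]
  · have := le_abs_self (Real.log K)
    have h2 := abs_nonneg (Real.log (ε ^ 2))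
    linarith [hlog2]
end

section
/- Let S_0,…,S_N be holomorphic functions on a neighborhood of 0 in ℂ, not all identically zero, such that the Wronskians W_{jk} := S_k S_j' − S_j S_k' are not all identically zero, and let q_0,…,q_N ≥ 0 be reals. Then there exist r > 0 and C > 0 such that for all t ∈ (0,1) and all z with 0 < |z| < r, both G_t(z) := Σ_{0 ≤ j < k ≤ N} t^{2(q_j+q_k)} |W_{jk}(z)|² and D_t(z) := Σ_j t^{2q_j} |S_j(z)|² are positive, and | z · ( ∂_z G_t(z)/G_t(z) − 2 ∂_z D_t(z)/D_t(z) ) | ≤ C, where ∂_z G_t(z) = Σ_{j<k} t^{2(q_j+q_k)} W_{jk}'(z) conj(W_{jk}(z)) and ∂_z D_t(z) = Σ_j t^{2q_j} S_j'(z) conj(S_j(z)). (This says |z ∂_z ln h_t(z)| ≤ C for h_t = G_t/D_t².) -/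
/-!
If `f` is analytic at `z₀` and not identically zero there, then `f = (z - z₀)ⁿ g` with
`g z₀ ≠ 0`, so `(z - z₀) f' / f = n + (z - z₀) g' / g` is bounded near `z₀`. This gives
`|z f'| ≤ c |f|` near `0` with one constant for all the `S_j`, and one for all the `W_jk`.
Since `z ∂_z G_t` and `z ∂_z D_t` weight the terms `z f' conj f` with the same nonnegative
coefficients `t^…` that weight `|f|²` in `G_t` and `D_t`, both quotients are bounded by these
constants uniformly in `t`. Isolated zeros of one non-trivial `S_j` and one non-trivial `W_jk`
make `G_t` and `D_t` positive on a punctured disc.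
-/

open Filter Topology Asymptotics ComplexConjugate

theorem ContinuousAt.isBigO_of_ne_zero {α F G : Type*} [TopologicalSpace α]
    [NormedAddCommGroup F] [NormedAddCommGroup G] {h : α → F} {g : α → G} {a : α}
    (hh : ContinuousAt h a) (hg : ContinuousAt g a) (hga : g a ≠ 0) : h =O[𝓝 a] g := by
  have hpos : 0 < ‖g a‖ := norm_pos_iff.mpr hga
  have hbelow : (fun _ => (1 : ℝ)) =O[𝓝 a] g :=
    (isBigO_const_left_iff_pos_le_norm one_ne_zero).mpr ⟨‖g a‖ / 2, by positivity,
      (hg.norm.eventually (lt_mem_nhds (half_lt_self hpos))).mono fun _ => le_of_lt⟩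
  exact (hh.tendsto.isBigO_one ℝ).trans hbelow

section LogDerivative

variable {𝕜 E : Type*} [NontriviallyNormedField 𝕜] [NormedAddCommGroup E] [NormedSpace 𝕜 E]
  {f g : 𝕜 → E} {z₀ : 𝕜}

theorem sub_smul_deriv_pow_smul_eq {n : ℕ} {z : 𝕜} (hg : DifferentiableAt 𝕜 g z) :
    (z - z₀) • deriv (fun w => (w - z₀) ^ n • g w) z
      = (z - z₀) ^ n • ((n : 𝕜) • g z + (z - z₀) • deriv g z) := by
  have hpow : HasDerivAt (fun w => (w - z₀) ^ n) (n * (z - z₀) ^ (n - 1)) z := by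
    simpa using ((hasDerivAt_id z).sub_const z₀).fun_pow n
  rw [(hpow.fun_smul hg.hasDerivAt).deriv]
  have hn : (z - z₀) * (n * (z - z₀) ^ (n - 1)) = n * (z - z₀) ^ n := by
    rcases Nat.eq_zero_or_pos n with rfl | hn
    · simp
    · rw [mul_left_comm, mul_pow_sub_one hn.ne']
  rw [smul_add, smul_add, smul_smul, smul_smul, smul_smul, smul_smul, hn, ← pow_succ', ← pow_succ,
    mul_comm]
  abel

variable [CompleteSpace E]

theorem AnalyticAt.isBigO_sub_smul_deriv (hf : AnalyticAt 𝕜 f z₀) :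
    (fun z => (z - z₀) • deriv f z) =O[𝓝 z₀] f := by
  by_cases hzero : ∀ᶠ z in 𝓝 z₀, f z = 0
  · have hderiv : deriv f =ᶠ[𝓝 z₀] 0 := by
      simpa using (show f =ᶠ[𝓝 z₀] 0 from hzero).deriv
    refine (isBigO_zero f (𝓝 z₀)).congr' ?_ EventuallyEq.rfl
    filter_upwards [hderiv] with z hz
    simp [hz]
  obtain ⟨n, g, hg, hg₀, hfg⟩ := hf.exists_eventuallyEq_pow_smul_nonzero_iff.mpr hzero
  have hderiv : (fun z => (z - z₀) ^ n • ((n : 𝕜) • g z + (z - z₀) • deriv g z))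
      =ᶠ[𝓝 z₀] fun z => (z - z₀) • deriv f z := by
    filter_upwards [(show f =ᶠ[𝓝 z₀] _ from hfg).deriv, hg.eventually_analyticAt]
      with z hfz hgz
    rw [hfz, sub_smul_deriv_pow_smul_eq hgz.differentiableAt]
  have hcoeff : (fun z => (n : 𝕜) • g z + (z - z₀) • deriv g z) =O[𝓝 z₀] g :=
    ContinuousAt.isBigO_of_ne_zero (by fun_prop) hg.continuousAt hg₀
  exact ((isBigO_refl (fun z => (z - z₀) ^ n) _).smul hcoeff).congr' hderiv
    (show _ =ᶠ[𝓝 z₀] f from (show f =ᶠ[𝓝 z₀] _ from hfg).symm)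

variable {ι : Type*} {s : Finset ι} {F : ι → 𝕜 → E}

theorem exists_eventually_forall_norm_sub_smul_deriv_le
    (hF : ∀ i ∈ s, AnalyticAt 𝕜 (F i) z₀) :
    ∃ c ≥ 0, ∀ᶠ z in 𝓝 z₀, ∀ i ∈ s, ‖(z - z₀) • deriv (F i) z‖ ≤ c * ‖F i z‖ := by
  have hbounds : ∀ᶠ c in atTop, ∀ i ∈ s,
      ∀ᶠ z in 𝓝 z₀, ‖(z - z₀) • deriv (F i) z‖ ≤ c * ‖F i z‖ :=
    (eventually_all_finset s).mpr fun i hi =>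
      isBigO_iff_eventually.mp (hF i hi).isBigO_sub_smul_deriv
  obtain ⟨c, hc, hc₀⟩ := (hbounds.and (eventually_ge_atTop 0)).exists
  exact ⟨c, hc₀, (eventually_all_finset s).mpr hc⟩

theorem exists_eventually_forall_norm_sub_smul_deriv_le_and_exists_ne_zero
    (hF : ∀ i ∈ s, AnalyticAt 𝕜 (F i) z₀) (hne : ∃ i ∈ s, ¬ F i =ᶠ[𝓝 z₀] 0) :
    ∃ c ≥ 0, ∀ᶠ z in 𝓝[≠] z₀,
      (∀ i ∈ s, ‖(z - z₀) • deriv (F i) z‖ ≤ c * ‖F i z‖) ∧ ∃ i ∈ s, F i z ≠ 0 := by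
  obtain ⟨c, hc₀, hc⟩ := exists_eventually_forall_norm_sub_smul_deriv_le hF
  obtain ⟨i, hi, hFi⟩ := hne
  have hFi_ne : ∀ᶠ z in 𝓝[≠] z₀, F i z ≠ 0 :=
    (hF i hi).eventually_eq_zero_or_eventually_ne_zero.resolve_left hFi
  exact ⟨c, hc₀, (hc.filter_mono nhdsWithin_le_nhds).and (hFi_ne.mono fun z hz => ⟨i, hi, hz⟩)⟩

end LogDerivative

section WeightedSums

variable {ι : Type*} {s : Finset ι} {w : ι → ℝ}

theorem sum_mul_norm_sq_pos {E : Type*} [NormedAddCommGroup E] {b : ι → E}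
    (hw : ∀ i ∈ s, 0 < w i) (hb : ∃ i ∈ s, b i ≠ 0) :
    0 < ∑ i ∈ s, w i * ‖b i‖ ^ 2 := by
  obtain ⟨i, hi, hbi⟩ := hb
  exact Finset.sum_pos' (fun j hj => by have := hw j hj; positivity)
    ⟨i, hi, by have := hw i hi; positivity⟩

theorem norm_mul_sum_mul_conj_le {𝕜 : Type*} [RCLike 𝕜] {a b : ι → 𝕜} {x : 𝕜} {c : ℝ}
    (hw : ∀ i ∈ s, 0 ≤ w i) (hab : ∀ i ∈ s, ‖x * a i‖ ≤ c * ‖b i‖) :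
    ‖x * ∑ i ∈ s, (w i : 𝕜) * a i * conj (b i)‖ ≤ c * ∑ i ∈ s, w i * ‖b i‖ ^ 2 := by
  rw [Finset.mul_sum, Finset.mul_sum]
  refine (norm_sum_le _ _).trans (Finset.sum_le_sum fun i hi => ?_)
  calc ‖x * ((w i : 𝕜) * a i * conj (b i))‖ = w i * (‖x * a i‖ * ‖b i‖) := by
        simp only [norm_mul, RCLike.norm_conj, RCLike.norm_ofReal, abs_of_nonneg (hw i hi)]
        ring
    _ ≤ w i * (c * ‖b i‖ * ‖b i‖) := by gcongr; exacts [hw i hi, hab i hi]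
    _ = c * (w i * ‖b i‖ ^ 2) := by ring

end WeightedSums

theorem norm_mul_div_sub_mul_div_le {𝕜 : Type*} [RCLike 𝕜] {x A B m : 𝕜} {g d cA cB : ℝ}
    (hg : 0 < g) (hd : 0 < d) (hA : ‖x * A‖ ≤ cA * g) (hB : ‖x * B‖ ≤ cB * d) :
    ‖x * (A / g - m * B / d)‖ ≤ cA + ‖m‖ * cB := by
  rw [mul_sub, ← mul_div_assoc, ← mul_div_assoc, mul_left_comm]
  refine (norm_sub_le _ _).trans (add_le_add ?_ ?_)
  · rwa [norm_div, RCLike.norm_ofReal, abs_of_pos hg, div_le_iff₀ hg]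
  · rw [norm_div, norm_mul, RCLike.norm_ofReal, abs_of_pos hd, div_le_iff₀ hd, mul_assoc]
    gcongr

open scoped Classical BigOperators

theorem log_derivative_density_bound_general
    (N : ℕ)
    (S : ℕ → ℂ → ℂ) (q : ℕ → ℝ)
    (hS : ∀ j ≤ N, AnalyticAt ℂ (S j) 0)
    (hSne : ∃ j ≤ N, ¬ (S j) =ᶠ[nhds (0 : ℂ)] 0)
    (W : ℕ → ℕ → ℂ → ℂ)
    (hW : ∀ j k, W j k = fun z => S k z * deriv (S j) z - S j z * deriv (S k) z)
    (hWne : ∃ j k, j < k ∧ k ≤ N ∧ ¬ (W j k) =ᶠ[nhds (0 : ℂ)] 0)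
    (G D : ℝ → ℂ → ℝ)
    (hG : ∀ t z, G t z = ∑ j ∈ Finset.range (N + 1), ∑ k ∈ Finset.Ico (j + 1) (N + 1),
      t ^ (2 * (q j + q k)) * ‖W j k z‖ ^ 2)
    (hD : ∀ t z, D t z = ∑ j ∈ Finset.range (N + 1),
      t ^ (2 * q j) * ‖S j z‖ ^ 2) :
    ∃ r > (0 : ℝ), ∃ C > (0 : ℝ), ∀ t ∈ Set.Ioo (0 : ℝ) 1, ∀ z : ℂ,
      0 < ‖z‖ → ‖z‖ < r →
        0 < G t z ∧ 0 < D t z ∧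
        ‖z *
          ((∑ j ∈ Finset.range (N + 1), ∑ k ∈ Finset.Ico (j + 1) (N + 1),
              ((t ^ (2 * (q j + q k)) : ℝ) : ℂ) * deriv (W j k) z * (starRingEnd ℂ) (W j k z))
            / (G t z : ℂ)
          - 2 * (∑ j ∈ Finset.range (N + 1),
              ((t ^ (2 * q j) : ℝ) : ℂ) * deriv (S j) z * (starRingEnd ℂ) (S j z))
            / (D t z : ℂ))‖ ≤ C := by
  set P := (Finset.range (N + 1)).sigma fun j => Finset.Ico (j + 1) (N + 1)
  have hSa : ∀ j ∈ Finset.range (N + 1), AnalyticAt ℂ (S j) 0 := fun j hj =>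
    hS j (Finset.mem_range_succ_iff.mp hj)
  have hWa : ∀ p ∈ P, AnalyticAt ℂ (W p.1 p.2) 0 := by
    rintro ⟨j, k⟩ hp
    simp only [P, Finset.mem_sigma, Finset.mem_range, Finset.mem_Ico] at hp
    have hSj := hS j (by omega)
    have hSk := hS k (by omega)
    rw [hW]
    fun_prop
  obtain ⟨j₀, hj₀, hSj₀⟩ := hSne
  obtain ⟨j₁, k₁, hjk₁, hk₁, hWj₁k₁⟩ := hWne
  obtain ⟨cS, hcS₀, hSnear⟩ := exists_eventually_forall_norm_sub_smul_deriv_le_and_exists_ne_zero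
    hSa ⟨j₀, Finset.mem_range_succ_iff.mpr hj₀, hSj₀⟩
  obtain ⟨cW, hcW₀, hWnear⟩ := exists_eventually_forall_norm_sub_smul_deriv_le_and_exists_ne_zero
    hWa ⟨⟨j₁, k₁⟩, by simp [P]; omega, hWj₁k₁⟩
  obtain ⟨r, hr, hball⟩ := Metric.mem_nhdsWithin_iff.mp (hSnear.and hWnear)
  refine ⟨r, hr, cW + 2 * cS + 1, by positivity, fun t ht z hz hzr => ?_⟩
  obtain ⟨⟨hSb, hSz⟩, hWb, hWz⟩ := hball ⟨mem_ball_zero_iff.mpr hzr, norm_pos_iff.mp hz⟩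
  simp only [smul_eq_mul, sub_zero] at hSb hWb
  have hGsum : G t z = ∑ p ∈ P, t ^ (2 * (q p.1 + q p.2)) * ‖W p.1 p.2 z‖ ^ 2 := by
    rw [hG, Finset.sum_sigma']
  have hGpos : 0 < G t z :=
    hGsum ▸ sum_mul_norm_sq_pos (fun _ _ => Real.rpow_pos_of_pos ht.1 _) hWz
  have hDpos : 0 < D t z :=
    hD t z ▸ sum_mul_norm_sq_pos (fun _ _ => Real.rpow_pos_of_pos ht.1 _) hSz
  refine ⟨hGpos, hDpos, ?_⟩
  rw [Finset.sum_sigma']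
  refine (norm_mul_div_sub_mul_div_le (cA := cW) (cB := cS) hGpos hDpos ?_ ?_).trans ?_
  · rw [hGsum]
    exact norm_mul_sum_mul_conj_le (fun _ _ => Real.rpow_nonneg ht.1.le _) hWb
  · rw [hD]
    exact norm_mul_sum_mul_conj_le (fun _ _ => Real.rpow_nonneg ht.1.le _) hSb
  · rw [Complex.norm_two]
    linarith

/-- Uniform bound `|z ∂_z ln h_t(z)| ≤ C` near `0`, uniformly in `t ∈ (0,1)`,
for `h_t = G_t / D_t²`. -/
theorem log_derivative_density_bound
    (N : ℕ)
    (S : ℕ → ℂ → ℂ) (q : ℕ → ℝ)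
    (hS : ∀ j ≤ N, AnalyticAt ℂ (S j) 0)
    (hSne : ∃ j ≤ N, ¬ (S j) =ᶠ[nhds (0 : ℂ)] 0)
    (hq : ∀ j ≤ N, 0 ≤ q j)
    (W : ℕ → ℕ → ℂ → ℂ)
    (hW : ∀ j k, W j k = fun z => S k z * deriv (S j) z - S j z * deriv (S k) z)
    (hWne : ∃ j k, j < k ∧ k ≤ N ∧ ¬ (W j k) =ᶠ[nhds (0 : ℂ)] 0)
    (G D : ℝ → ℂ → ℝ)
    (hG : ∀ t z, G t z = ∑ j ∈ Finset.range (N + 1), ∑ k ∈ Finset.Ico (j + 1) (N + 1),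
      t ^ (2 * (q j + q k)) * ‖W j k z‖ ^ 2)
    (hD : ∀ t z, D t z = ∑ j ∈ Finset.range (N + 1),
      t ^ (2 * q j) * ‖S j z‖ ^ 2) :
    ∃ r > (0 : ℝ), ∃ C > (0 : ℝ), ∀ t ∈ Set.Ioo (0 : ℝ) 1, ∀ z : ℂ,
      0 < ‖z‖ → ‖z‖ < r →
        0 < G t z ∧ 0 < D t z ∧
        ‖z *
          ((∑ j ∈ Finset.range (N + 1), ∑ k ∈ Finset.Ico (j + 1) (N + 1),
              ((t ^ (2 * (q j + q k)) : ℝ) : ℂ) * deriv (W j k) z * (starRingEnd ℂ) (W j k z))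
            / (G t z : ℂ)
          - 2 * (∑ j ∈ Finset.range (N + 1),
              ((t ^ (2 * q j) : ℝ) : ℂ) * deriv (S j) z * (starRingEnd ℂ) (S j z))
            / (D t z : ℂ))‖ ≤ C :=
  log_derivative_density_bound_general N S q hS hSne W hW hWne G D hG hD
end

section
/- (Lemma 1) Let m > m' ≥ 0 be reals, let (P,Q) ∈ ℝ² with P, Q ≥ 0, and let (p_1,q_1),…,(p_M,q_M) be points of ℝ² with nonnegative coordinates such that for every j: q_j − Q + m(p_j − P) ≥ 0 and q_j − Q + m'(p_j − P) ≥ 0. Set A := Σ_{j=1}^M (q_j − Q) and B := Σ_{j=1}^M (p_j − P). Then, as t → 0⁺ (t real, 0 < t < 1), ∫_{t^m ≤ |z| < t^{m'}} t^{2A} |z|^{2B} · dA(z)/(2π |z|²) = δ · (m − m') · ln(1/t) + O(1), where δ = 1 if (p_j,q_j) = (P,Q) for every j, and δ = 0 otherwise. -/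
open scoped Classical BigOperators

open MeasureTheory Set intervalIntegral in
lemma annulus_key (A B t mm mm' : ℝ) (ht0 : 0 < t) (ht1 : t < 1) (hmm : mm' < mm) :
    (∫ z in {z : ℂ | t ^ mm ≤ ‖z‖ ∧ ‖z‖ < t ^ mm'},
        t ^ (2 * A) * ‖z‖ ^ (2 * B) / (2 * Real.pi * ‖z‖ ^ 2))
      = t ^ (2 * A) * ∫ y in (t ^ mm)..(t ^ mm'), y ^ (2 * B - 1) := by
  set a := t ^ mm with ha_def
  set b := t ^ mm' with hb_def
  have ha : 0 < a := Real.rpow_pos_of_pos ht0 _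
  have hab : a < b := Real.rpow_lt_rpow_of_exponent_gt ht0 ht1 hmm
  set F : ℝ → ℝ := fun r => t ^ (2 * A) * r ^ (2 * B) / (2 * Real.pi * r ^ 2) with hF
  have h1 : (∫ z in {z : ℂ | a ≤ ‖z‖ ∧ ‖z‖ < b},
        t ^ (2 * A) * ‖z‖ ^ (2 * B) / (2 * Real.pi * ‖z‖ ^ 2))
      = ∫ z : ℂ, (Set.Ico a b).indicator F ‖z‖ := by
    have hset : {z : ℂ | a ≤ ‖z‖ ∧ ‖z‖ < b}
        = (fun z : ℂ => ‖z‖) ⁻¹' Set.Ico a b := by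
      ext z; simp [Set.mem_Ico]
    rw [hset, ← MeasureTheory.integral_indicator (measurable_norm measurableSet_Ico)]
    congr 1
  rw [h1, MeasureTheory.integral_fun_norm_addHaar volume ((Set.Ico a b).indicator F)]
  have hdim : Module.finrank ℝ ℂ = 2 := Complex.finrank_real_complex
  rw [hdim]
  have hball : (volume (Metric.ball (0:ℂ) 1)).toReal = Real.pi := by
    rw [Complex.volume_ball]
    simp
  rw [measureReal_def, hball]
  have h2 : ∀ y : ℝ, y ^ (2 - 1 : ℕ) • (Set.Ico a b).indicator F y
      = (Set.Ico a b).indicator (fun y => y * F y) y := by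
    intro y
    by_cases hy : y ∈ Set.Ico a b <;> simp [hy]
  simp only [h2]
  have hinter : Set.Ioi (0:ℝ) ∩ Set.Ico a b = Set.Ico a b :=
    Set.inter_eq_self_of_subset_right (fun y hy => lt_of_lt_of_le ha hy.1)
  rw [MeasureTheory.setIntegral_indicator measurableSet_Ico,
    hinter,
    MeasureTheory.integral_Ico_eq_integral_Ioo,
    ← MeasureTheory.integral_Ioc_eq_integral_Ioo,
    ← intervalIntegral.integral_of_le hab.le]
  have h4 : ∫ y in a..b, y * F y = (t ^ (2*A) / (2 * Real.pi)) * ∫ y in a..b, y ^ (2*B - 1) := by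
    rw [← intervalIntegral.integral_const_mul]
    apply intervalIntegral.integral_congr
    intro y hy
    rw [Set.uIcc_of_le hab.le] at hy
    have hy0 : 0 < y := lt_of_lt_of_le ha hy.1
    have hpow : y ^ (2*B - 1) = y ^ (2*B) / y := by
      rw [Real.rpow_sub hy0, Real.rpow_one]
    show y * F y = t ^ (2 * A) / (2 * Real.pi) * y ^ (2 * B - 1)
    rw [hpow, hF]
    field_simp
  rw [h4]
  rw [nsmul_eq_mul, smul_eq_mul]
  have hπ : Real.pi ≠ 0 := Real.pi_ne_zero
  field_simp
  ring

/-- Lemma 1: asymptotics of `∫_{t^m ≤ |z| < t^{m'}} t^{2A} |z|^{2B} dA/(2π|z|²)`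
as `t → 0⁺`, where the points `(p_j, q_j)` lie in the Newton diagram above the
vertex `(P, Q)` with supporting slopes `-m` and `-m'`. -/
theorem newton_annulus_integral_asymptotics
    (m m' : ℝ) (hm : m' < m) (hm' : 0 ≤ m')
    (P Q : ℝ) (hP : 0 ≤ P) (hQ : 0 ≤ Q)
    (M : ℕ) (p q : ℕ → ℝ)
    (hpq : ∀ j ∈ Finset.Icc 1 M, 0 ≤ p j ∧ 0 ≤ q j)
    (hline : ∀ j ∈ Finset.Icc 1 M, 0 ≤ q j - Q + m * (p j - P))
    (hline' : ∀ j ∈ Finset.Icc 1 M, 0 ≤ q j - Q + m' * (p j - P))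
    (A B : ℝ)
    (hA : A = ∑ j ∈ Finset.Icc 1 M, (q j - Q))
    (hB : B = ∑ j ∈ Finset.Icc 1 M, (p j - P))
    (δ : ℝ)
    (hδ : δ = if ∀ j ∈ Finset.Icc 1 M, p j = P ∧ q j = Q then 1 else 0) :
    ∃ C > 0, ∃ t₀ ∈ Set.Ioo (0 : ℝ) 1, ∀ t ∈ Set.Ioo (0 : ℝ) t₀,
      |(∫ z in {z : ℂ | t ^ m ≤ ‖z‖ ∧ ‖z‖ < t ^ m'},
          t ^ (2 * A) * ‖z‖ ^ (2 * B) / (2 * Real.pi * ‖z‖ ^ 2))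
        - δ * (m - m') * Real.log (1 / t)| ≤ C := by
  have hAmB : 0 ≤ A + m * B := by
    rw [hA, hB, Finset.mul_sum, ← Finset.sum_add_distrib]
    exact Finset.sum_nonneg hline
  have hAm'B : 0 ≤ A + m' * B := by
    rw [hA, hB, Finset.mul_sum, ← Finset.sum_add_distrib]
    exact Finset.sum_nonneg hline'
  have ht₀mem : (1/2 : ℝ) ∈ Set.Ioo (0:ℝ) 1 := by norm_num
  by_cases hall : ∀ j ∈ Finset.Icc 1 M, p j = P ∧ q j = Q
  · -- δ = 1, A = B = 0
    have hA0 : A = 0 := by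
      rw [hA]; exact Finset.sum_eq_zero fun j hj => by rw [(hall j hj).2]; ring
    have hB0 : B = 0 := by
      rw [hB]; exact Finset.sum_eq_zero fun j hj => by rw [(hall j hj).1]; ring
    refine ⟨1, one_pos, 1/2, ht₀mem, ?_⟩
    rintro t ⟨ht0, ht2⟩
    have ht1 : t < 1 := ht2.trans (by norm_num)
    rw [annulus_key A B t m m' ht0 ht1 hm]
    have hI : (∫ y in (t^m)..(t^m'), y ^ (2*B - 1)) = (m - m') * Real.log (1/t) := by
      have he : (2*B - 1 : ℝ) = -1 := by rw [hB0]; ring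
      rw [he]
      simp_rw [Real.rpow_neg_one]
      rw [integral_inv_of_pos (Real.rpow_pos_of_pos ht0 m) (Real.rpow_pos_of_pos ht0 m'),
        ← Real.rpow_sub ht0, Real.log_rpow ht0, one_div, Real.log_inv]
      ring
    rw [hI, hδ, if_pos hall, hA0, mul_zero, Real.rpow_zero, one_mul, one_mul]
    simp
  · have hδ0 : δ = 0 := by rw [hδ, if_neg hall]
    by_cases hB0 : B = 0
    · -- B = 0, A > 0
      have hA' : 0 ≤ A := by rw [hB0] at hAm'B; linarith
      have hAne : A ≠ 0 := by
        intro hA0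
        apply hall
        have hsum : ∑ j ∈ Finset.Icc 1 M, (q j - Q + m * (p j - P)) = 0 := by
          rw [Finset.sum_add_distrib, ← Finset.mul_sum, ← hA, ← hB, hA0, hB0]; ring
        have hsum' : ∑ j ∈ Finset.Icc 1 M, (q j - Q + m' * (p j - P)) = 0 := by
          rw [Finset.sum_add_distrib, ← Finset.mul_sum, ← hA, ← hB, hA0, hB0]; ring
        have h1 := (Finset.sum_eq_zero_iff_of_nonneg hline).1 hsum
        have h2 := (Finset.sum_eq_zero_iff_of_nonneg hline').1 hsum'
        intro j hj
        have e1 := h1 j hj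
        have e2 := h2 j hj
        have h3 : (m - m') * (p j - P) = 0 := by linear_combination e1 - e2
        have hp : p j = P := by
          rcases mul_eq_zero.1 h3 with h | h
          · exact absurd (sub_eq_zero.1 h) (by linarith)
          · linarith [sub_eq_zero.1 h]
        refine ⟨hp, ?_⟩
        rw [hp] at e1
        linarith [e1]
      have hApos : 0 < A := lt_of_le_of_ne hA' (Ne.symm hAne)
      have hmm' : 0 < m - m' := by linarith
      refine ⟨(m - m') / (2*A) + 1, by positivity, 1/2, ht₀mem, ?_⟩
      rintro t ⟨ht0, ht2⟩
      have ht1 : t < 1 := ht2.trans (by norm_num)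
      rw [annulus_key A B t m m' ht0 ht1 hm]
      have hI : (∫ y in (t^m)..(t^m'), y ^ (2*B - 1)) = (m - m') * Real.log (1/t) := by
        have he : (2*B - 1 : ℝ) = -1 := by rw [hB0]; ring
        rw [he]
        simp_rw [Real.rpow_neg_one]
        rw [integral_inv_of_pos (Real.rpow_pos_of_pos ht0 m) (Real.rpow_pos_of_pos ht0 m'),
          ← Real.rpow_sub ht0, Real.log_rpow ht0, one_div, Real.log_inv]
        ring
      rw [hI, hδ0]
      simp only [zero_mul, sub_zero]
      have hlog0 : 0 ≤ Real.log (1/t) :=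
        Real.log_nonneg (one_le_one_div ht0 ht1.le)
      have htpow : 0 < t ^ (2*A) := Real.rpow_pos_of_pos ht0 _
      have hx : (0:ℝ) < 1/t := by positivity
      have h2A : 0 < 2*A := by linarith
      have hlog : Real.log (1/t) ≤ (1/t) ^ (2*A) / (2*A) := by
        have h := Real.log_le_sub_one_of_pos (Real.rpow_pos_of_pos hx (2*A))
        rw [Real.log_rpow hx] at h
        rw [le_div_iff₀ h2A]
        nlinarith [Real.rpow_pos_of_pos hx (2*A)]
      have hmul : t ^ (2*A) * (1/t) ^ (2*A) = 1 := by
        rw [← Real.mul_rpow ht0.le (by positivity), mul_one_div, div_self ht0.ne',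
          Real.one_rpow]
      have habs : |t ^ (2*A) * ((m - m') * Real.log (1/t))|
          = t ^ (2*A) * ((m - m') * Real.log (1/t)) := by
        apply abs_of_nonneg
        positivity
      rw [habs]
      calc t ^ (2*A) * ((m - m') * Real.log (1/t))
          = (m - m') * (t ^ (2*A) * Real.log (1/t)) := by ring
        _ ≤ (m - m') * (t ^ (2*A) * ((1/t) ^ (2*A) / (2*A))) := by
            gcongr
        _ = (t ^ (2*A) * (1/t) ^ (2*A)) * ((m - m') / (2*A)) := by ring
        _ = (m - m') / (2*A) := by rw [hmul, one_mul]
        _ ≤ (m - m') / (2*A) + 1 := by linarith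
    · -- B ≠ 0
      have h2Bne : (2*B : ℝ) ≠ 0 := by
        intro h; exact hB0 (by linarith)
      refine ⟨1 / |2*B|, by positivity, 1/2, ht₀mem, ?_⟩
      rintro t ⟨ht0, ht2⟩
      have ht1 : t < 1 := ht2.trans (by norm_num)
      have ha : 0 < t ^ m := Real.rpow_pos_of_pos ht0 m
      have hb : 0 < t ^ m' := Real.rpow_pos_of_pos ht0 m'
      rw [annulus_key A B t m m' ht0 ht1 hm]
      have hI : (∫ y in (t^m)..(t^m'), y ^ (2*B - 1))
          = ((t^m') ^ (2*B) - (t^m) ^ (2*B)) / (2*B) := by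
        have h2B : (2*B - 1 : ℝ) ≠ -1 := by
          intro h; exact h2Bne (by linarith)
        rw [integral_rpow (Or.inr ⟨h2B, Set.notMem_uIcc_of_lt ha hb⟩)]
        have : (2*B - 1 + 1 : ℝ) = 2*B := by ring
        rw [this]
      rw [hI, hδ0]
      simp only [zero_mul, sub_zero]
      have hval : t ^ (2*A) * (((t^m') ^ (2*B) - (t^m) ^ (2*B)) / (2*B))
          = (t ^ (2*A + m' * (2*B)) - t ^ (2*A + m * (2*B))) / (2*B) := by
        have e1 : t ^ (2*A + m' * (2*B)) = t ^ (2*A) * (t^m') ^ (2*B) := by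
          rw [Real.rpow_add ht0, Real.rpow_mul ht0.le m' (2*B)]
        have e2 : t ^ (2*A + m * (2*B)) = t ^ (2*A) * (t^m) ^ (2*B) := by
          rw [Real.rpow_add ht0, Real.rpow_mul ht0.le m (2*B)]
        rw [e1, e2]
        ring
      rw [hval, abs_div]
      have hs1 : 0 ≤ 2*A + m' * (2*B) := by
        have : 2*A + m' * (2*B) = 2*(A + m'*B) := by ring
        rw [this]; linarith
      have hs2 : 0 ≤ 2*A + m * (2*B) := by
        have : 2*A + m * (2*B) = 2*(A + m*B) := by ring
        rw [this]; linarith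
      have hb1 : t ^ (2*A + m' * (2*B)) ≤ 1 := Real.rpow_le_one ht0.le ht1.le hs1
      have hb2 : t ^ (2*A + m * (2*B)) ≤ 1 := Real.rpow_le_one ht0.le ht1.le hs2
      have hp1 : 0 < t ^ (2*A + m' * (2*B)) := Real.rpow_pos_of_pos ht0 _
      have hp2 : 0 < t ^ (2*A + m * (2*B)) := Real.rpow_pos_of_pos ht0 _
      rw [div_le_div_iff_of_pos_right (abs_pos.mpr h2Bne)]
      rw [abs_le]
      constructor <;> linarith
end

section
/- (Lemma 2) Let T_1,…,T_M be holomorphic functions on a neighborhood of 0 in ℂ, not all identically zero, and let q_1,…,q_M ≥ 0 be reals. Then there exist r > 0 and C > 0 such that for every ε > 0 and every z with 0 < |z| < r: Σ_{l=1}^M ε^{2 q_l} |T_l(z)|² > 0, and ( Σ_{1 ≤ j < k ≤ M} ε^{2(q_j + q_k)} |T_j(z) T_k'(z) − T_k(z) T_j'(z)|² ) / ( Σ_{l=1}^M ε^{2 q_l} |T_l(z)|² )² ≤ C / |z|². -/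
open scoped Classical BigOperators

open Filter

-- derivative helper: z * d/dz (z^n * F z)
lemma aux_zderiv (n : ℕ) (F : ℂ → ℂ) (z : ℂ) (hF : DifferentiableAt ℂ F z) :
    z * deriv (fun w => w ^ n * F w) z
      = (n : ℂ) * z ^ n * F z + z ^ (n + 1) * deriv F z := by
  have h := deriv_mul (c := fun w : ℂ => w ^ n) (d := F)
      (differentiableAt_pow n) hF
  rw [show (fun w => w ^ n * F w) = (fun w : ℂ => w ^ n) * F from rfl, h, deriv_pow_field]
  cases n with
  | zero => simp
  | succ n => push_cast; ring

lemma analyticAt_deriv {f : ℂ → ℂ} (hf : AnalyticAt ℂ f 0) : AnalyticAt ℂ (deriv f) 0 := by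
  obtain ⟨s, hs, hfs⟩ := hf.exists_mem_nhds_analyticOnNhd
  exact hfs.deriv 0 (mem_of_mem_nhds hs)

-- pair bound
lemma pair_bound (f g : ℂ → ℂ) (hf : AnalyticAt ℂ f 0) (hg : AnalyticAt ℂ g 0) :
    ∃ C > (0:ℝ), ∀ᶠ z in nhds (0:ℂ),
      ‖z‖ * ‖f z * deriv g z - g z * deriv f z‖
        ≤ C * (‖f z‖ * ‖g z‖) := by
  by_cases hf0 : ∀ᶠ z in nhds (0:ℂ), f z = 0
  · refine ⟨1, one_pos, ?_⟩
    have hdf : deriv f =ᶠ[nhds (0:ℂ)] deriv (fun _ => (0:ℂ)) := Filter.EventuallyEq.deriv hf0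
    filter_upwards [hf0, hdf] with z h1 h2
    simp only [h1, h2, deriv_const]
    simp
  by_cases hg0 : ∀ᶠ z in nhds (0:ℂ), g z = 0
  · refine ⟨1, one_pos, ?_⟩
    have hdg : deriv g =ᶠ[nhds (0:ℂ)] deriv (fun _ => (0:ℂ)) := Filter.EventuallyEq.deriv hg0
    filter_upwards [hg0, hdg] with z h1 h2
    simp only [h1, h2, deriv_const]
    simp
  obtain ⟨m, F, hFa, hF0, hfF⟩ := hf.exists_eventuallyEq_pow_smul_nonzero_iff.mpr hf0
  obtain ⟨n, G, hGa, hG0, hgG⟩ := hg.exists_eventuallyEq_pow_smul_nonzero_iff.mpr hg0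
  simp only [sub_zero, smul_eq_mul] at hfF hgG
  -- H is analytic at 0
  set H : ℂ → ℂ := fun z => ((n : ℂ) - m) * (F z * G z)
      + z * (F z * deriv G z - G z * deriv F z) with hH
  have hHa : AnalyticAt ℂ H 0 := by
    apply AnalyticAt.add
    · exact analyticAt_const.mul (hFa.mul hGa)
    · exact analyticAt_id.mul (((hFa.mul (analyticAt_deriv hGa))).sub (hGa.mul (analyticAt_deriv hFa)))
  set δ : ℝ := ‖F 0‖ * ‖G 0‖ / 2 with hδ
  have hδpos : 0 < δ := by
    have := norm_pos_iff.mpr hF0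
    have := norm_pos_iff.mpr hG0
    positivity
  refine ⟨(‖H 0‖ + 1) / δ, by positivity, ?_⟩
  -- eventual facts
  have hFd : ∀ᶠ z in nhds (0:ℂ), DifferentiableAt ℂ F z := by
    filter_upwards [hFa.eventually_analyticAt] with z hz using hz.differentiableAt
  have hGd : ∀ᶠ z in nhds (0:ℂ), DifferentiableAt ℂ G z := by
    filter_upwards [hGa.eventually_analyticAt] with z hz using hz.differentiableAt
  have hdf : deriv f =ᶠ[nhds (0:ℂ)] deriv (fun w => w ^ m * F w) := Filter.EventuallyEq.deriv hfF
  have hdg : deriv g =ᶠ[nhds (0:ℂ)] deriv (fun w => w ^ n * G w) := Filter.EventuallyEq.deriv hgG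
  have hHb : ∀ᶠ z in nhds (0:ℂ), ‖H z‖ ≤ ‖H 0‖ + 1 := by
    have := hHa.continuousAt
    have h2 : ContinuousAt (fun z => ‖H z‖) 0 := (continuous_norm.continuousAt).comp this
    have := h2.eventually_le_const (by linarith : ‖H 0‖ < ‖H 0‖ + 1)
    exact this
  have hFGb : ∀ᶠ z in nhds (0:ℂ), δ ≤ ‖F z‖ * ‖G z‖ := by
    have hc : ContinuousAt (fun z => ‖F z‖ * ‖G z‖) 0 :=
      ((continuous_norm.continuousAt).comp hFa.continuousAt).mul
        ((continuous_norm.continuousAt).comp hGa.continuousAt)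
    have := hc.eventually_const_le (by rw [hδ]; linarith [mul_pos (norm_pos_iff.mpr hF0) (norm_pos_iff.mpr hG0)] : δ < ‖F 0‖ * ‖G 0‖)
    exact this
  filter_upwards [hfF, hgG, hdf, hdg, hFd, hGd, hHb, hFGb] with z h1 h2 h3 h4 h5 h6 h7 h8
  -- key identity : z * (f z * deriv g z - g z * deriv f z) = z^(m+n) * H z
  have key : z * (f z * deriv g z - g z * deriv f z) = z ^ (m + n) * H z := by
    have e1 : z * deriv f z = (m : ℂ) * z ^ m * F z + z ^ (m + 1) * deriv F z := by
      rw [h3]; exact aux_zderiv m F z h5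
    have e2 : z * deriv g z = (n : ℂ) * z ^ n * G z + z ^ (n + 1) * deriv G z := by
      rw [h4]; exact aux_zderiv n G z h6
    have : z * (f z * deriv g z - g z * deriv f z)
        = f z * (z * deriv g z) - g z * (z * deriv f z) := by ring
    rw [this, e1, e2, h1, h2, hH]
    ring
  have habs : ‖z‖ * ‖f z * deriv g z - g z * deriv f z‖
      = ‖z‖ ^ (m + n) * ‖H z‖ := by
    rw [← norm_mul, key, norm_mul, norm_pow]
  rw [habs, h1, h2]
  have hfg : ‖z ^ m * F z‖ * ‖z ^ n * G z‖
      = ‖z‖ ^ (m + n) * (‖F z‖ * ‖G z‖) := by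
    rw [norm_mul, norm_mul, norm_pow, norm_pow, pow_add]; ring
  rw [hfg]
  calc ‖z‖ ^ (m + n) * ‖H z‖
      ≤ ‖z‖ ^ (m + n) * (‖H 0‖ + 1) := by
        apply mul_le_mul_of_nonneg_left h7 (by positivity)
    _ = ((‖H 0‖ + 1) / δ) * (‖z‖ ^ (m + n) * δ) := by
        field_simp
    _ ≤ ((‖H 0‖ + 1) / δ) * (‖z‖ ^ (m + n) * (‖F z‖ * ‖G z‖)) := by
        apply mul_le_mul_of_nonneg_left _ (by positivity)
        exact mul_le_mul_of_nonneg_left h8 (by positivity)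


/-- Lemma 2: uniform bound `∂_z ∂_{z̄} ln (Σ_l ε^{2q_l} |T_l|²) ≤ C/|z|²`,
uniformly in `ε > 0`, via the explicit Wronskian formula. -/
theorem log_laplacian_uniform_bound
    (M : ℕ) (T : ℕ → ℂ → ℂ) (q : ℕ → ℝ)
    (hT : ∀ l ∈ Finset.Icc 1 M, AnalyticAt ℂ (T l) 0)
    (hTne : ∃ l ∈ Finset.Icc 1 M, ¬ (T l) =ᶠ[nhds (0 : ℂ)] 0)
    (hq : ∀ l ∈ Finset.Icc 1 M, 0 ≤ q l) :
    ∃ r > (0 : ℝ), ∃ C > (0 : ℝ), ∀ ε > (0 : ℝ), ∀ z : ℂ,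
      0 < ‖z‖ → ‖z‖ < r →
        0 < ∑ l ∈ Finset.Icc 1 M, ε ^ (2 * q l) * ‖T l z‖ ^ 2 ∧
        (∑ j ∈ Finset.Icc 1 M, ∑ k ∈ Finset.Icc (j + 1) M,
            ε ^ (2 * (q j + q k)) *
              ‖T j z * deriv (T k) z - T k z * deriv (T j) z‖ ^ 2)
          / (∑ l ∈ Finset.Icc 1 M, ε ^ (2 * q l) * ‖T l z‖ ^ 2) ^ 2
        ≤ C / ‖z‖ ^ 2 := by
  classical
  obtain ⟨l0, hl0mem, hl0ne⟩ := hTne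
  have hpair : ∀ j ∈ Finset.Icc 1 M, ∀ k ∈ Finset.Icc 1 M, ∃ C > (0:ℝ),
      ∀ᶠ z in nhds (0:ℂ),
        ‖z‖ * ‖T j z * deriv (T k) z - T k z * deriv (T j) z‖
          ≤ C * (‖T j z‖ * ‖T k z‖) :=
    fun j hj k hk => pair_bound _ _ (hT j hj) (hT k hk)
  choose! c hcpos hc using hpair
  set C0 : ℝ := ∑ j ∈ Finset.Icc 1 M, ∑ k ∈ Finset.Icc 1 M, c j k with hC0
  have hC0pos : 0 < C0 := by
    apply Finset.sum_pos (fun j hj => Finset.sum_pos (fun k hk => hcpos j hj k hk) ⟨l0, hl0mem⟩)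
    exact ⟨l0, hl0mem⟩
  have hcle : ∀ j ∈ Finset.Icc 1 M, ∀ k ∈ Finset.Icc 1 M, c j k ≤ C0 := by
    intro j hj k hk
    calc c j k ≤ ∑ k' ∈ Finset.Icc 1 M, c j k' :=
          Finset.single_le_sum (fun i hi => (hcpos j hj i hi).le) hk
      _ ≤ C0 := Finset.single_le_sum
          (fun i hi => Finset.sum_nonneg (fun i' hi' => (hcpos i hi i' hi').le)) hj
  -- combine eventual statements on the punctured neighborhood
  have hev0 : ∀ᶠ z in nhdsWithin (0:ℂ) {(0:ℂ)}ᶜ, T l0 z ≠ 0 :=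
    ((hT l0 hl0mem).eventually_eq_zero_or_eventually_ne_zero).resolve_left hl0ne
  have hev1 : ∀ᶠ z in nhds (0:ℂ), ∀ j ∈ Finset.Icc 1 M, ∀ k ∈ Finset.Icc 1 M,
      ‖z‖ * ‖T j z * deriv (T k) z - T k z * deriv (T j) z‖
        ≤ c j k * (‖T j z‖ * ‖T k z‖) :=
    (Filter.eventually_all_finset _).2 (fun j hj => (Filter.eventually_all_finset _).2
      (fun k hk => hc j hj k hk))
  have hev := hev0.and (hev1.filter_mono nhdsWithin_le_nhds)
  rw [eventually_nhdsWithin_iff, Metric.eventually_nhds_iff] at hev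
  obtain ⟨r, hr, hrP⟩ := hev
  refine ⟨r, hr, C0 ^ 2, by positivity, ?_⟩
  intro ε hε z hz hzr
  have hzne : z ≠ 0 := by
    intro h; rw [h] at hz; simp at hz
  have hdist : dist z 0 < r := by rwa [Complex.dist_eq, sub_zero]
  obtain ⟨hTl0, hW⟩ := hrP hdist (by simpa using hzne)
  set a : ℕ → ℝ := fun l => ε ^ (2 * q l) * ‖T l z‖ ^ 2 with ha
  set D : ℝ := ∑ l ∈ Finset.Icc 1 M, a l with hD
  have hann : ∀ l, 0 ≤ a l := fun l => by
    have := Real.rpow_pos_of_pos hε (2 * q l); positivity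
  have hDpos : 0 < D := by
    apply Finset.sum_pos' (fun l _ => hann l)
    refine ⟨l0, hl0mem, ?_⟩
    have h1 := Real.rpow_pos_of_pos hε (2 * q l0)
    have h2 := norm_pos_iff.mpr hTl0
    positivity
  refine ⟨hDpos, ?_⟩
  rw [div_le_div_iff₀ (by positivity) (by positivity)]
  calc (∑ j ∈ Finset.Icc 1 M, ∑ k ∈ Finset.Icc (j + 1) M,
            ε ^ (2 * (q j + q k)) *
              ‖T j z * deriv (T k) z - T k z * deriv (T j) z‖ ^ 2)
          * ‖z‖ ^ 2
      = ∑ j ∈ Finset.Icc 1 M, ∑ k ∈ Finset.Icc (j + 1) M,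
          ε ^ (2 * (q j + q k)) *
            ‖T j z * deriv (T k) z - T k z * deriv (T j) z‖ ^ 2
              * ‖z‖ ^ 2 := by
        simp [Finset.sum_mul]
    _ ≤ ∑ j ∈ Finset.Icc 1 M, ∑ k ∈ Finset.Icc (j + 1) M, C0 ^ 2 * (a j * a k) := by
        apply Finset.sum_le_sum
        intro j hj
        apply Finset.sum_le_sum
        intro k hk
        have hkmem : k ∈ Finset.Icc 1 M := by
          simp only [Finset.mem_Icc] at hj hk ⊢; omega
        have hWjk := hW j hj k hkmem
        have hcC : c j k ≤ C0 := hcle j hj k hkmem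
        have hcnn : 0 ≤ c j k := (hcpos j hj k hkmem).le
        have hrpow : ε ^ (2 * (q j + q k)) = ε ^ (2 * q j) * ε ^ (2 * q k) := by
          rw [← Real.rpow_add hε]; ring_nf
        have hsq : (‖z‖ *
            ‖T j z * deriv (T k) z - T k z * deriv (T j) z‖) ^ 2
            ≤ (c j k * (‖T j z‖ * ‖T k z‖)) ^ 2 := by
          apply pow_le_pow_left₀ (by positivity) hWjk
        have hc2 : c j k ^ 2 ≤ C0 ^ 2 := pow_le_pow_left₀ hcnn hcC 2
        have e1 : ε ^ (2 * (q j + q k)) *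
              ‖T j z * deriv (T k) z - T k z * deriv (T j) z‖ ^ 2
              * ‖z‖ ^ 2
            = (ε ^ (2 * q j) * ε ^ (2 * q k)) *
              ((‖z‖ *
                ‖T j z * deriv (T k) z - T k z * deriv (T j) z‖) ^ 2) := by
          rw [hrpow]; ring
        have e2 : C0 ^ 2 * (a j * a k)
            = (ε ^ (2 * q j) * ε ^ (2 * q k)) *
              (C0 ^ 2 * (‖T j z‖ * ‖T k z‖) ^ 2) := by
          simp only [ha]; ring
        rw [e1, e2]
        apply mul_le_mul_of_nonneg_left _ (by
          have := Real.rpow_pos_of_pos hε (2 * q j)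
          have := Real.rpow_pos_of_pos hε (2 * q k)
          positivity)
        calc (‖z‖ *
              ‖T j z * deriv (T k) z - T k z * deriv (T j) z‖) ^ 2
            ≤ (c j k * (‖T j z‖ * ‖T k z‖)) ^ 2 := hsq
          _ = c j k ^ 2 * (‖T j z‖ * ‖T k z‖) ^ 2 := by ring
          _ ≤ C0 ^ 2 * (‖T j z‖ * ‖T k z‖) ^ 2 := by
              apply mul_le_mul_of_nonneg_right hc2 (by positivity)
    _ ≤ ∑ j ∈ Finset.Icc 1 M, ∑ k ∈ Finset.Icc 1 M, C0 ^ 2 * (a j * a k) := by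
        apply Finset.sum_le_sum
        intro j hj
        apply Finset.sum_le_sum_of_subset_of_nonneg
        · apply Finset.Icc_subset_Icc (by omega) le_rfl
        · intro k hk _
          have := hann j; have := hann k; positivity
    _ = C0 ^ 2 * (D * D) := by
        rw [hD, Finset.sum_mul_sum, Finset.mul_sum]
        exact Finset.sum_congr rfl fun j _ => by rw [Finset.mul_sum]
    _ = C0 ^ 2 * D ^ 2 := by ring
end

section
/- Let S_0,…,S_N be holomorphic functions on a neighborhood of 0 in ℂ, with S_j(z) = u_j z^{p_j} + O(z^{p_j+1}) near 0 where u_j ≠ 0 and p_j ∈ ℕ, and let q_0,…,q_N ≥ 0 be reals. Let m ≥ m' ≥ 0 be reals and suppose (P,Q) = (p_{j₀}, q_{j₀}) for some index j₀ and that q_j − Q + m(p_j − P) ≥ 0 and q_j − Q + m'(p_j − P) ≥ 0 for every j. Then there exist r₀ > 0, t₀ ∈ (0,1), and constants 0 < c ≤ C such that for all t ∈ (0, t₀) and all z with t^m ≤ |z| ≤ min(t^{m'}, r₀): c · t^{2Q} |z|^{2P} ≤ Σ_{j=0}^N t^{2 q_j} |S_j(z)|² ≤ C · t^{2Q} |z|^{2P}.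 -/
open scoped BigOperators

set_option maxHeartbeats 1000000 in
/-- Two-sided comparability of `D_t(z) = Σ_j t^{2q_j} |S_j(z)|²` with the
vertex monomial `t^{2Q} |z|^{2P}` on the annulus `t^m ≤ |z| ≤ min(t^{m'}, r₀)`. -/
theorem D_comparable_with_vertex_monomial
    (N : ℕ) (S : ℕ → ℂ → ℂ) (u : ℕ → ℂ) (p : ℕ → ℕ) (q : ℕ → ℝ)
    (hS : ∀ j ≤ N, AnalyticAt ℂ (S j) 0)
    (hu : ∀ j ≤ N, u j ≠ 0)
    (hord : ∀ j ≤ N,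
      (fun z : ℂ => S j z - u j * z ^ p j) =O[nhds (0 : ℂ)] fun z : ℂ => z ^ (p j + 1))
    (hq : ∀ j ≤ N, 0 ≤ q j)
    (m m' : ℝ) (hm : m' ≤ m) (hm' : 0 ≤ m')
    (P Q : ℝ)
    (hvert : ∃ j₀ ≤ N, (p j₀ : ℝ) = P ∧ q j₀ = Q)
    (hline : ∀ j ≤ N, 0 ≤ q j - Q + m * ((p j : ℝ) - P))
    (hline' : ∀ j ≤ N, 0 ≤ q j - Q + m' * ((p j : ℝ) - P)) :
    ∃ r₀ > (0 : ℝ), ∃ t₀ ∈ Set.Ioo (0 : ℝ) 1, ∃ c > (0 : ℝ), ∃ C : ℝ, c ≤ C ∧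
      ∀ t ∈ Set.Ioo (0 : ℝ) t₀, ∀ z : ℂ,
        t ^ m ≤ ‖z‖ → ‖z‖ ≤ min (t ^ m') r₀ →
          c * (t ^ (2 * Q) * ‖z‖ ^ (2 * P))
              ≤ ∑ j ∈ Finset.range (N + 1), t ^ (2 * q j) * ‖S j z‖ ^ 2 ∧
          ∑ j ∈ Finset.range (N + 1), t ^ (2 * q j) * ‖S j z‖ ^ 2
              ≤ C * (t ^ (2 * Q) * ‖z‖ ^ (2 * P)) := by
  obtain ⟨j₀, hj₀N, hP, hQ⟩ := hvert
  -- choose per-index big-O constants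
  have hbd : ∀ j, ∃ K : ℝ, 0 < K ∧ (j ≤ N →
      ∀ᶠ z in nhds (0 : ℂ), ‖S j z - u j * z ^ p j‖ ≤ K * ‖z‖ ^ (p j + 1)) := by
    intro j
    by_cases hj : j ≤ N
    · obtain ⟨K, hK, h⟩ := (hord j hj).exists_pos
      refine ⟨K, hK, fun _ => ?_⟩
      filter_upwards [h.bound] with z hz
      simpa [norm_pow] using hz
    · exact ⟨1, one_pos, fun h => absurd h hj⟩
  choose K hKpos hKbd using hbd
  have hev : ∀ᶠ z in nhds (0 : ℂ), ∀ j ∈ Finset.range (N + 1),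
      ‖S j z - u j * z ^ p j‖ ≤ K j * ‖z‖ ^ (p j + 1) := by
    rw [Filter.eventually_all_finset]
    intro j hj
    exact hKbd j (Nat.lt_succ_iff.mp (Finset.mem_range.mp hj))
  obtain ⟨ε, hε, hball⟩ := Metric.eventually_nhds_iff.mp hev
  have hu₀ : 0 < ‖u j₀‖ := by
    simpa using (norm_pos_iff.mpr (hu j₀ hj₀N))
  set r₀ : ℝ := min (ε / 2) (‖u j₀‖ / (2 * K j₀)) with hr₀def
  have hr₀pos : 0 < r₀ := lt_min (by linarith) (div_pos hu₀ (mul_pos two_pos (hKpos j₀)))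
  refine ⟨r₀, hr₀pos, 1/2, by norm_num, (‖u j₀‖ / 2) ^ 2, pow_pos (half_pos hu₀) 2,
    ∑ j ∈ Finset.range (N + 1), (‖u j‖ + K j * r₀) ^ 2, ?_, ?_⟩
  · -- c ≤ C
    have h1 : (‖u j₀‖ / 2) ^ 2 ≤ (‖u j₀‖ + K j₀ * r₀) ^ 2 := by
      have : ‖u j₀‖ / 2 ≤ ‖u j₀‖ + K j₀ * r₀ := by
        have : 0 ≤ K j₀ * r₀ := mul_nonneg (hKpos j₀).le hr₀pos.le
        linarith
      exact pow_le_pow_left₀ (div_nonneg (norm_nonneg _) two_pos.le) this 2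
    refine h1.trans (Finset.single_le_sum (f := fun j => (‖u j‖ + K j * r₀) ^ 2)
      (fun j _ => sq_nonneg _) ?_)
    exact Finset.mem_range.mpr (Nat.lt_succ_of_le hj₀N)
  · intro t ht z hz1 hz2
    have ht0 : 0 < t := ht.1
    have ht1 : t < 1 := by have := ht.2; linarith
    set A : ℝ := ‖z‖ with hA
    have hA0 : 0 < A := lt_of_lt_of_le (Real.rpow_pos_of_pos ht0 m) hz1
    have hzm' : A ≤ t ^ m' := le_trans hz2 (min_le_left _ _)
    have hzr : A ≤ r₀ := le_trans hz2 (min_le_right _ _)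
    have hzε : dist z 0 < ε := by
      rw [Complex.dist_eq, sub_zero]
      calc ‖z‖ ≤ r₀ := hzr
        _ ≤ ε / 2 := min_le_left _ _
        _ < ε := by linarith
    have hbz := hball hzε
    -- basic norm facts
    have habs : ∀ j ≤ N, ‖S j z‖ ≤ (‖u j‖ + K j * r₀) * A ^ p j := by
      intro j hj
      have h1 : ‖S j z - u j * z ^ p j‖ ≤ K j * A ^ (p j + 1) := by
        have := hbz j (Finset.mem_range.mpr (Nat.lt_succ_of_le hj))
        simpa using this
      have h2 : ‖S j z‖ ≤ ‖u j * z ^ p j‖ + ‖S j z - u j * z ^ p j‖ := by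
        have := norm_add_le (u j * z ^ p j) (S j z - u j * z ^ p j)
        simpa using this
      have h3 : ‖u j * z ^ p j‖ = ‖u j‖ * A ^ p j := by
        simp [norm_mul, norm_pow, hA]
      have h4 : K j * A ^ (p j + 1) ≤ K j * r₀ * A ^ p j := by
        rw [pow_succ]
        have : A ^ p j * A ≤ A ^ p j * r₀ :=
          mul_le_mul_of_nonneg_left hzr (pow_nonneg hA0.le _)
        nlinarith [this, (hKpos j)]
      calc ‖S j z‖ ≤ ‖u j‖ * A ^ p j + K j * A ^ (p j + 1) := by
            rw [← h3]; linarith [h1, h2]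
        _ ≤ ‖u j‖ * A ^ p j + K j * r₀ * A ^ p j := by linarith
        _ = (‖u j‖ + K j * r₀) * A ^ p j := by ring
    -- the key monomial comparison
    have hkey : ∀ j ≤ N, t ^ (2 * q j) * A ^ (2 * (p j : ℝ)) ≤ t ^ (2 * Q) * A ^ (2 * P) := by
      intro j hj
      have hfac : t ^ (2 * (q j - Q)) * A ^ (2 * ((p j : ℝ) - P)) ≤ 1 := by
        set b : ℝ := (p j : ℝ) - P with hb
        rcases le_or_gt 0 b with hb0 | hb0
        · have h1 : A ^ (2 * b) ≤ (t ^ m') ^ (2 * b) :=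
            Real.rpow_le_rpow hA0.le hzm' (by linarith)
          have h2 : (t ^ m') ^ (2 * b) = t ^ (m' * (2 * b)) := (Real.rpow_mul ht0.le _ _).symm
          calc t ^ (2 * (q j - Q)) * A ^ (2 * b)
              ≤ t ^ (2 * (q j - Q)) * t ^ (m' * (2 * b)) := by
                have := h1.trans_eq h2
                exact mul_le_mul_of_nonneg_left this (Real.rpow_nonneg ht0.le _)
            _ = t ^ (2 * (q j - Q) + m' * (2 * b)) := (Real.rpow_add ht0 _ _).symm
            _ ≤ 1 := by
                apply Real.rpow_le_one ht0.le ht1.le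
                have := hline' j hj
                nlinarith
        · have h1 : A ^ (2 * b) ≤ (t ^ m) ^ (2 * b) := by
            apply Real.rpow_le_rpow_of_nonpos (Real.rpow_pos_of_pos ht0 m) hz1
            nlinarith
          have h2 : (t ^ m) ^ (2 * b) = t ^ (m * (2 * b)) := (Real.rpow_mul ht0.le _ _).symm
          calc t ^ (2 * (q j - Q)) * A ^ (2 * b)
              ≤ t ^ (2 * (q j - Q)) * t ^ (m * (2 * b)) := by
                have := h1.trans_eq h2
                exact mul_le_mul_of_nonneg_left this (Real.rpow_nonneg ht0.le _)
            _ = t ^ (2 * (q j - Q) + m * (2 * b)) := (Real.rpow_add ht0 _ _).symm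
            _ ≤ 1 := by
                apply Real.rpow_le_one ht0.le ht1.le
                have := hline j hj
                nlinarith
      have e1 : t ^ (2 * q j) = t ^ (2 * Q) * t ^ (2 * (q j - Q)) := by
        rw [← Real.rpow_add ht0]; ring_nf
      have e2 : A ^ (2 * (p j : ℝ)) = A ^ (2 * P) * A ^ (2 * ((p j : ℝ) - P)) := by
        rw [← Real.rpow_add hA0]; ring_nf
      calc t ^ (2 * q j) * A ^ (2 * (p j : ℝ))
          = (t ^ (2 * Q) * A ^ (2 * P)) * (t ^ (2 * (q j - Q)) * A ^ (2 * ((p j : ℝ) - P))) := by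
            rw [e1, e2]; ring
        _ ≤ (t ^ (2 * Q) * A ^ (2 * P)) * 1 :=
            mul_le_mul_of_nonneg_left hfac (mul_nonneg (Real.rpow_nonneg ht0.le _) (Real.rpow_nonneg hA0.le _))
        _ = t ^ (2 * Q) * A ^ (2 * P) := mul_one _
    -- nat-pow to rpow conversion
    have hnat : ∀ j : ℕ, (A ^ p j) ^ 2 = A ^ (2 * (p j : ℝ)) := by
      intro j
      rw [← pow_mul, ← Real.rpow_natCast A (p j * 2)]
      push_cast
      ring_nf
    constructor
    · -- lower bound
      have hKr : K j₀ * r₀ ≤ ‖u j₀‖ / 2 := by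
        have h1 : r₀ ≤ ‖u j₀‖ / (2 * K j₀) := min_le_right _ _
        have h2 := hKpos j₀
        have h3 := mul_le_mul_of_nonneg_left h1 h2.le
        have h4 : K j₀ * (‖u j₀‖ / (2 * K j₀)) = ‖u j₀‖ / 2 := by
          field_simp
        linarith
      have hlow : ‖u j₀‖ / 2 * A ^ p j₀ ≤ ‖S j₀ z‖ := by
        have h1 : ‖S j₀ z - u j₀ * z ^ p j₀‖ ≤ K j₀ * A ^ (p j₀ + 1) := by
          have := hbz j₀ (Finset.mem_range.mpr (Nat.lt_succ_of_le hj₀N))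
          simpa using this
        have h2 : ‖u j₀‖ * A ^ p j₀ - ‖S j₀ z - u j₀ * z ^ p j₀‖
            ≤ ‖S j₀ z‖ := by
          have h3 : ‖u j₀ * z ^ p j₀‖ = ‖u j₀‖ * A ^ p j₀ := by
            simp [norm_mul, norm_pow, hA]
          have h5 := norm_sub_norm_le (u j₀ * z ^ p j₀) (S j₀ z)
          rw [norm_sub_rev] at h5
          rw [h3] at h5
          linarith
        have h4 : K j₀ * A ^ (p j₀ + 1) ≤ ‖u j₀‖ / 2 * A ^ p j₀ := by
          rw [pow_succ]
          have h5 : K j₀ * A ≤ ‖u j₀‖ / 2 := by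
            have : K j₀ * A ≤ K j₀ * r₀ :=
              mul_le_mul_of_nonneg_left hzr (hKpos j₀).le
            linarith
          nlinarith [pow_nonneg hA0.le (p j₀), hA0.le]
        linarith
      have hterm : (‖u j₀‖ / 2) ^ 2 * (t ^ (2 * Q) * A ^ (2 * P))
          ≤ t ^ (2 * q j₀) * ‖S j₀ z‖ ^ 2 := by
        have hsq : (‖u j₀‖ / 2 * A ^ p j₀) ^ 2 ≤ ‖S j₀ z‖ ^ 2 :=
          pow_le_pow_left₀ (mul_nonneg (div_nonneg (norm_nonneg _) two_pos.le)
            (pow_nonneg hA0.le _)) hlow 2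
        have e3 : A ^ (2 * P) = (A ^ p j₀) ^ 2 := by rw [hnat j₀, hP]
        rw [hQ]
        calc (‖u j₀‖ / 2) ^ 2 * (t ^ (2 * Q) * A ^ (2 * P))
            = t ^ (2 * Q) * (‖u j₀‖ / 2 * A ^ p j₀) ^ 2 := by
              rw [e3]; ring
          _ ≤ t ^ (2 * Q) * ‖S j₀ z‖ ^ 2 :=
              mul_le_mul_of_nonneg_left hsq (Real.rpow_nonneg ht0.le _)
      refine hterm.trans (Finset.single_le_sum
        (f := fun j => t ^ (2 * q j) * ‖S j z‖ ^ 2)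
        (fun j _ => mul_nonneg (Real.rpow_nonneg ht0.le _) (sq_nonneg _)) ?_)
      exact Finset.mem_range.mpr (Nat.lt_succ_of_le hj₀N)
    · -- upper bound
      rw [Finset.sum_mul]
      apply Finset.sum_le_sum
      intro j hj
      have hjN : j ≤ N := Nat.lt_succ_iff.mp (Finset.mem_range.mp hj)
      have hsq : ‖S j z‖ ^ 2 ≤ ((‖u j‖ + K j * r₀) * A ^ p j) ^ 2 :=
        pow_le_pow_left₀ (norm_nonneg _) (habs j hjN) 2
      calc t ^ (2 * q j) * ‖S j z‖ ^ 2
          ≤ t ^ (2 * q j) * ((‖u j‖ + K j * r₀) * A ^ p j) ^ 2 :=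
            mul_le_mul_of_nonneg_left hsq (Real.rpow_nonneg ht0.le _)
        _ = (‖u j‖ + K j * r₀) ^ 2 * (t ^ (2 * q j) * A ^ (2 * (p j : ℝ))) := by
            rw [← hnat j]; ring
        _ ≤ (‖u j‖ + K j * r₀) ^ 2 * (t ^ (2 * Q) * A ^ (2 * P)) :=
            mul_le_mul_of_nonneg_left (hkey j hjN) (sq_nonneg _)
end

section
/- Let T_0,…,T_N be holomorphic functions on a neighborhood of 0 in ℂ. Then there exist r > 0 and C > 0 such that for all nonnegative reals a_0,…,a_N and all z with 0 < |z| < r: | Σ_{l=0}^N a_l · T_l'(z) · conj(T_l(z)) | ≤ (C/|z|) · Σ_{l=0}^N a_l · |T_l(z)|². -/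
open Filter Metric Topology

lemma key_deriv_bound (f : ℂ → ℂ) (hf : AnalyticAt ℂ f 0) :
    ∃ r > (0:ℝ), ∃ C > (0:ℝ), ∀ z : ℂ, 0 < ‖z‖ → ‖z‖ < r →
      ‖deriv f z‖ ≤ C / ‖z‖ * ‖f z‖ := by
  rcases eq_or_ne (analyticOrderAt f 0) ⊤ with h | h
  · have hz : ∀ᶠ z in 𝓝 (0:ℂ), f z = 0 := analyticOrderAt_eq_top.mp h
    rw [Metric.eventually_nhds_iff_ball] at hz
    obtain ⟨ε, hε, hball⟩ := hz
    refine ⟨ε, hε, 1, one_pos, fun z hz0 hzr => ?_⟩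
    have hder : deriv f z = 0 := by
      have hmem : Metric.ball (0:ℂ) ε ∈ 𝓝 z :=
        (Metric.isOpen_ball).mem_nhds (by simpa [Complex.dist_eq] using hzr)
      have hev : f =ᶠ[𝓝 z] fun _ => 0 := by
        filter_upwards [hmem] with w hw; exact hball w hw
      rw [hev.deriv_eq, deriv_const]
    rw [hder]
    have : (0:ℝ) ≤ 1 / ‖z‖ * ‖f z‖ := by positivity
    simpa using this
  · obtain ⟨n, hn⟩ := (WithTop.ne_top_iff_exists).mp h
    obtain ⟨g, hg, hg0, hfg⟩ := (hf.analyticOrderAt_eq_natCast (n := n)).mp hn.symm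
    have hga0 : 0 < ‖g 0‖ := by simpa using hg0
    set m : ℝ := ‖g 0‖ / 2 with hm
    have hm0 : 0 < m := by positivity
    have hgc : ∀ᶠ z in 𝓝 (0:ℂ), m < ‖g z‖ := by
      have hc : ContinuousAt (fun z => ‖g z‖) 0 :=
        continuous_norm.continuousAt.comp hg.continuousAt
      exact continuousAt_const.eventually_lt hc (by rw [hm]; linarith)
    set M : ℝ := ‖deriv g 0‖ + 1 with hM
    have hM0 : 0 < M := by positivity
    have hdg : AnalyticAt ℂ (deriv g) 0 := by
      obtain ⟨t, ht, hto, ht0⟩ := _root_.eventually_nhds_iff.mp hg.eventually_analyticAt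
      exact (AnalyticOnNhd.deriv (fun x hx => ht x hx)) 0 ht0
    have hgd : ∀ᶠ z in 𝓝 (0:ℂ), ‖deriv g z‖ < M := by
      have hc : ContinuousAt (fun z => ‖deriv g z‖) 0 :=
        continuous_norm.continuousAt.comp hdg.continuousAt
      exact hc.eventually_lt continuousAt_const (by simp [hM])
    have hgan : ∀ᶠ z in 𝓝 (0:ℂ), AnalyticAt ℂ g z := hg.eventually_analyticAt
    have hall := hfg.and (hgc.and (hgd.and hgan))
    rw [Metric.eventually_nhds_iff_ball] at hall
    obtain ⟨ε, hε, hball⟩ := hall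
    refine ⟨min ε (m / M), lt_min hε (by positivity), n + 1, by positivity,
      fun z hz0 hzr => ?_⟩
    have hzε : ‖z‖ < ε := lt_of_lt_of_le hzr (min_le_left _ _)
    have hzmM : ‖z‖ < m / M := lt_of_lt_of_le hzr (min_le_right _ _)
    have hzball : z ∈ Metric.ball (0:ℂ) ε := by simpa [Complex.dist_eq] using hzε
    obtain ⟨hfz, hgz, hdz, hanz⟩ := hball z hzball
    -- deriv f z
    have hmem : Metric.ball (0:ℂ) ε ∈ 𝓝 z := (Metric.isOpen_ball).mem_nhds hzball
    have hev : f =ᶠ[𝓝 z] fun w => w ^ n * g w := by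
      filter_upwards [hmem] with w hw
      have := (hball w hw).1
      simpa using this
    have hderf : deriv f z = (n : ℂ) * z ^ (n - 1) * g z + z ^ n * deriv g z := by
      rw [hev.deriv_eq]
      rw [deriv_fun_mul (differentiable_pow n |>.differentiableAt) hanz.differentiableAt]
      simp [deriv_pow]
    have hfzv : f z = z ^ n * g z := by simpa using hfz
    rw [div_mul_eq_mul_div, le_div_iff₀ hz0, hderf, hfzv]
    have hdf : ‖(n : ℂ) * z ^ (n - 1) * g z + z ^ n * deriv g z‖
        ≤ (n : ℝ) * ‖z‖ ^ (n - 1) * ‖g z‖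
          + ‖z‖ ^ n * ‖deriv g z‖ := by
      refine (norm_add_le _ _).trans ?_
      simp [map_mul, map_pow]
    have hAD : ‖z‖ * ‖deriv g z‖ ≤ m := by
      have := mul_le_mul hzmM.le hdz.le (norm_nonneg _) (by positivity)
      rwa [div_mul_cancel₀ _ (ne_of_gt hM0)] at this
    have hfabs : ‖z ^ n * g z‖ = ‖z‖ ^ n * ‖g z‖ := by
      simp [map_mul, map_pow]
    rw [hfabs]
    cases n with
    | zero =>
      simp only [Nat.zero_sub, pow_zero, Nat.cast_zero, zero_mul, zero_add, one_mul] at hdf ⊢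
      calc ‖deriv g z‖ * ‖z‖
          = ‖z‖ * ‖deriv g z‖ := by ring
        _ ≤ m := hAD
        _ ≤ ‖g z‖ := hgz.le
    | succ k =>
      have hP : (0:ℝ) ≤ ‖z‖ ^ k := by positivity
      have hG : m ≤ ‖g z‖ := hgz.le
      have hpow : ‖z‖ ^ (k + 1) = ‖z‖ ^ k * ‖z‖ := pow_succ _ _
      have hsub : (k + 1 : ℕ) - 1 = k := rfl
      rw [hsub] at hdf
      have h1 : ‖(↑(k+1) : ℂ) * z ^ ((k+1) - 1) * g z + z ^ (k+1) * deriv g z‖ * ‖z‖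
          ≤ ((k+1 : ℝ) * ‖z‖ ^ k * ‖g z‖
            + ‖z‖ ^ (k+1) * ‖deriv g z‖) * ‖z‖ := by
        apply mul_le_mul_of_nonneg_right _ (norm_nonneg z)
        simpa using hdf
      refine h1.trans ?_
      rw [hpow]
      have hADm : ‖z‖ * ‖deriv g z‖ ≤ ‖g z‖ := hAD.trans hG
      have hA0 : (0:ℝ) ≤ ‖z‖ := norm_nonneg z
      have hG0 : (0:ℝ) ≤ ‖g z‖ := norm_nonneg _
      push_cast
      nlinarith [mul_le_mul_of_nonneg_left hADm hP, sq_nonneg (‖z‖)]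

open scoped BigOperators

/-- Uniform bound `|∂_z ln(Σ_l a_l |T_l|²)| ≤ C/|z|` near `0`, uniformly in the
nonnegative weights `a_l`. -/
theorem weighted_log_derivative_bound
    (N : ℕ) (T : ℕ → ℂ → ℂ)
    (hT : ∀ l ≤ N, AnalyticAt ℂ (T l) 0) :
    ∃ r > (0 : ℝ), ∃ C > (0 : ℝ), ∀ a : ℕ → ℝ, (∀ l ≤ N, 0 ≤ a l) →
      ∀ z : ℂ, 0 < ‖z‖ → ‖z‖ < r →
        ‖∑ l ∈ Finset.range (N + 1),
            (a l : ℂ) * deriv (T l) z * (starRingEnd ℂ) (T l z)‖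
          ≤ C / ‖z‖ * ∑ l ∈ Finset.range (N + 1),
              a l * ‖T l z‖ ^ 2 := by
  have key : ∀ l : ℕ, ∃ r > (0:ℝ), ∃ C > (0:ℝ), ∀ z : ℂ, 0 < ‖z‖ →
      ‖z‖ < r → l ≤ N →
      ‖deriv (T l) z‖ ≤ C / ‖z‖ * ‖T l z‖ := by
    intro l
    by_cases hl : l ≤ N
    · obtain ⟨r, hr, C, hC, hb⟩ := key_deriv_bound (T l) (hT l hl)
      exact ⟨r, hr, C, hC, fun z h1 h2 _ => hb z h1 h2⟩
    · exact ⟨1, one_pos, 1, one_pos, fun z _ _ h => absurd h hl⟩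
  choose r hr C hC hb using key
  have hne : (Finset.range (N+1)).Nonempty := ⟨0, by simp⟩
  refine ⟨(Finset.range (N+1)).inf' hne r, ?_, (Finset.range (N+1)).sup' hne C, ?_, ?_⟩
  · exact (Finset.lt_inf'_iff hne).mpr fun i _ => hr i
  · exact lt_of_lt_of_le (hC 0) (Finset.le_sup' C (by simp))
  · intro a ha z hz0 hzr
    set r0 := (Finset.range (N+1)).inf' hne r
    set C0 := (Finset.range (N+1)).sup' hne C
    calc ‖∑ l ∈ Finset.range (N + 1),
            (a l : ℂ) * deriv (T l) z * (starRingEnd ℂ) (T l z)‖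
        ≤ ∑ l ∈ Finset.range (N + 1),
            ‖(a l : ℂ) * deriv (T l) z * (starRingEnd ℂ) (T l z)‖ :=
          norm_sum_le _ _
      _ ≤ ∑ l ∈ Finset.range (N + 1),
            C0 / ‖z‖ * (a l * ‖T l z‖ ^ 2) := by
          refine Finset.sum_le_sum fun l hl => ?_
          have hlN : l ≤ N := Finset.mem_range_succ_iff.mp hl
          have hal : 0 ≤ a l := ha l hlN
          have hzrl : ‖z‖ < r l := lt_of_lt_of_le hzr (Finset.inf'_le r hl)
          have hbd := hb l z hz0 hzrl hlN
          have hCl : C l ≤ C0 := Finset.le_sup' C hl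
          have habs : ‖(a l : ℂ) * deriv (T l) z * (starRingEnd ℂ) (T l z)‖
              = a l * (‖deriv (T l) z‖ * ‖T l z‖) := by
            rw [norm_mul, norm_mul, Complex.norm_conj, Complex.norm_real, Real.norm_eq_abs, abs_of_nonneg hal,
              mul_assoc]
          rw [habs]
          have h1 : ‖deriv (T l) z‖ * ‖T l z‖
              ≤ C l / ‖z‖ * ‖T l z‖ * ‖T l z‖ :=
            mul_le_mul_of_nonneg_right hbd (norm_nonneg _)
          have h2 : C l / ‖z‖ * ‖T l z‖ * ‖T l z‖
              ≤ C0 / ‖z‖ * ‖T l z‖ * ‖T l z‖ := by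
            have hCd : C l / ‖z‖ ≤ C0 / ‖z‖ := by
              gcongr
            nlinarith [norm_nonneg (T l z), sq_nonneg (‖T l z‖)]
          calc a l * (‖deriv (T l) z‖ * ‖T l z‖)
              ≤ a l * (C0 / ‖z‖ * ‖T l z‖ * ‖T l z‖) := by
                exact mul_le_mul_of_nonneg_left (h1.trans h2) hal
            _ = C0 / ‖z‖ * (a l * ‖T l z‖ ^ 2) := by ring
      _ = C0 / ‖z‖ * ∑ l ∈ Finset.range (N + 1),
            a l * ‖T l z‖ ^ 2 := by rw [Finset.mul_sum]
end
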